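/- arXiv:1503.04117 — 11 statements merged into one kernel-verified Lean document; each statement's English description precedes it below -/
import Mathlib

section
/- For r, q ∈ (0,1) and x > 0, the ratio of infinite q-Pochhammer symbols (r;q)_∞ / (rq^x;q)_∞ converges to (1−r)^x as q → 1⁻. -/
/-!
Expanding each `log (1 - a q^i)` in powers of `a q^i` and summing the geometric series in `i`
gives `log (a;q)_∞ = -∑ₙ a^(n+1) / ((n+1)(1 - q^(n+1)))`. Applied to `a = r` and `a = r q^x`,
the log of the ratio becomes `-∑ₙ r^(n+1)/(n+1) · (1 - t^x)/(1 - t)` with `t = q^(n+1)`.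
As `q → 1⁻` each quotient `(1 - t^x)/(1 - t)` tends to the derivative `x` of `t ↦ t^x` at `1`,
and it is bounded by `max 1 x`, so by dominated convergence the series tends to
`x · ∑ₙ r^(n+1)/(n+1) = -x log (1 - r)`.
-/

open Filter Set Topology Real

section RpowSlope

variable {x t : ℝ}

lemma tendsto_one_sub_rpow_div_one_sub (x : ℝ) :
    Tendsto (fun t : ℝ => (1 - t ^ x) / (1 - t)) (𝓝[<] 1) (𝓝 x) := by
  have hderiv : HasDerivAt (fun t : ℝ => t ^ x) (x * 1 ^ (x - 1)) 1 :=
    hasDerivAt_rpow_const (Or.inl one_ne_zero)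
  rw [hasDerivAt_iff_tendsto_slope, one_rpow, mul_one] at hderiv
  refine (hderiv.mono_left (nhdsLT_le_nhdsNE 1)).congr fun t => ?_
  rw [slope_def_field, one_rpow, ← neg_div_neg_eq, neg_sub, neg_sub]

lemma one_sub_rpow_le_max_mul_one_sub (ht0 : 0 < t) (ht1 : t < 1) :
    1 - t ^ x ≤ max 1 x * (1 - t) := by
  rcases le_total x 1 with hx1 | hx1
  · have ht_le : t ≤ t ^ x := by
      simpa using rpow_le_rpow_of_exponent_ge ht0 ht1.le hx1
    nlinarith [le_max_left 1 x]
  · have hbernoulli : 1 + x * (t - 1) ≤ (1 + (t - 1)) ^ x :=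
      one_add_mul_self_le_rpow_one_add (by linarith) hx1
    rw [add_sub_cancel] at hbernoulli
    rw [max_eq_right hx1]
    linarith

lemma abs_one_sub_rpow_div_one_sub_le (hx : 0 ≤ x) (ht0 : 0 < t) (ht1 : t < 1) :
    |(1 - t ^ x) / (1 - t)| ≤ max 1 x := by
  have hpos : 0 < 1 - t := sub_pos.2 ht1
  rw [abs_of_nonneg (div_nonneg (sub_nonneg.2 (rpow_le_one ht0.le ht1.le hx)) hpos.le),
    div_le_iff₀ hpos]
  exact one_sub_rpow_le_max_mul_one_sub ht0 ht1

lemma tendsto_tsum_mul_one_sub_rpow_div_one_sub {c : ℕ → ℝ} (hc : Summable c) (hx : 0 ≤ x) :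
    Tendsto (fun q : ℝ => ∑' n : ℕ, c n * ((1 - (q ^ (n + 1)) ^ x) / (1 - q ^ (n + 1))))
      (𝓝[<] 1) (𝓝 (∑' n : ℕ, c n * x)) := by
  have hq : ∀ᶠ q in 𝓝[<] (1 : ℝ), q ∈ Ioo 0 1 := Ioo_mem_nhdsLT one_pos
  refine tendsto_tsum_of_dominated_convergence (bound := fun n => |c n| * max 1 x)
    (hc.abs.mul_right _) (fun n => ?_) ?_
  · have hpow : Tendsto (fun q : ℝ => q ^ (n + 1)) (𝓝[<] 1) (𝓝[<] 1) := by
      refine tendsto_nhdsWithin_iff.2 ⟨?_, ?_⟩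
      · simpa using ((continuous_pow (n + 1)).tendsto (1 : ℝ)).mono_left nhdsWithin_le_nhds
      · filter_upwards [hq] with q hq
        exact pow_lt_one₀ hq.1.le hq.2 n.succ_ne_zero
    exact ((tendsto_one_sub_rpow_div_one_sub x).comp hpow).const_mul (c n)
  · filter_upwards [hq] with q hq n
    rw [norm_mul, Real.norm_eq_abs, Real.norm_eq_abs]
    exact mul_le_mul_of_nonneg_left (abs_one_sub_rpow_div_one_sub_le hx (pow_pos hq.1 _)
      (pow_lt_one₀ hq.1.le hq.2 n.succ_ne_zero)) (abs_nonneg _)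

end RpowSlope

section QPochhammer

variable {a q : ℝ}

lemma summable_pow_succ_div_mul_one_sub_pow (ha0 : 0 ≤ a) (ha1 : a < 1) (hq0 : 0 ≤ q)
    (hq1 : q < 1) :
    Summable fun n : ℕ => a ^ (n + 1) / ((n + 1) * (1 - q ^ (n + 1))) := by
  refine Summable.of_nonneg_of_le (fun n => ?_) (fun n => ?_)
    ((summable_geometric_of_lt_one ha0 ha1).div_const (1 - q))
  · have : q ^ (n + 1) < 1 := pow_lt_one₀ hq0 hq1 n.succ_ne_zero
    have : 0 < 1 - q ^ (n + 1) := by linarith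
    positivity
  · have hq_pow : q ^ (n + 1) ≤ q := pow_le_of_le_one hq0 hq1.le n.succ_ne_zero
    have hn : (1 : ℝ) ≤ n + 1 := by simp
    refine div_le_div₀ (by positivity) (pow_le_pow_of_le_one ha0 ha1.le n.le_succ)
      (sub_pos.2 hq1) ?_
    nlinarith

lemma hasSum_log_one_sub_mul_pow (ha0 : 0 ≤ a) (ha1 : a < 1) (hq0 : 0 ≤ q) (hq1 : q < 1) :
    HasSum (fun i : ℕ => log (1 - a * q ^ i))
      (-∑' n : ℕ, a ^ (n + 1) / ((n + 1) * (1 - q ^ (n + 1)))) := by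
  set g : ℕ → ℕ → ℝ := fun n i => (a * q ^ i) ^ (n + 1) / (n + 1)
  have hrow : ∀ n, HasSum (g n) (a ^ (n + 1) / ((n + 1) * (1 - q ^ (n + 1)))) := fun n => by
    have hgeom := (hasSum_geometric_of_lt_one (pow_nonneg hq0 (n + 1))
      (pow_lt_one₀ hq0 hq1 n.succ_ne_zero)).mul_left (a ^ (n + 1) / (n + 1))
    rw [div_mul_eq_div_div, div_eq_mul_inv _ (1 - _)]
    refine hgeom.congr_fun fun i => ?_
    simp only [g, mul_pow, ← pow_mul, mul_comm i]
    ring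
  have hcol : ∀ i, HasSum (fun n => g n i) (-log (1 - a * q ^ i)) := fun i => by
    have hai : a * q ^ i ≤ a := mul_le_of_le_one_right ha0 (pow_le_one₀ hq0 hq1.le)
    exact hasSum_pow_div_log_of_abs_lt_one
      (abs_lt.2 ⟨by linarith [mul_nonneg ha0 (pow_nonneg hq0 i)], by linarith⟩)
  have hg : Summable (Function.uncurry g) := by
    refine (summable_prod_of_nonneg fun ⟨n, i⟩ => by dsimp [g]; positivity).2
      ⟨fun n => (hrow n).summable, ?_⟩
    simpa only [Function.uncurry_apply_pair, (hrow _).tsum_eq] using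
      summable_pow_succ_div_mul_one_sub_pow ha0 ha1 hq0 hq1
  have hrows := hg.hasSum.prod_fiberwise hrow
  have hcols := ((Equiv.prodComm ℕ ℕ).hasSum_iff.2 hg.hasSum).prod_fiberwise hcol
  rw [hrows.tsum_eq]
  simpa only [neg_neg] using hcols.neg

lemma tprod_one_sub_mul_pow_eq_exp (ha0 : 0 ≤ a) (ha1 : a < 1) (hq0 : 0 ≤ q) (hq1 : q < 1) :
    ∏' i : ℕ, (1 - a * q ^ i) = exp (-∑' n : ℕ, a ^ (n + 1) / ((n + 1) * (1 - q ^ (n + 1)))) := by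
  refine (Real.hasProd_of_hasSum_log (fun i => ?_)
    (hasSum_log_one_sub_mul_pow ha0 ha1 hq0 hq1)).tprod_eq
  nlinarith [mul_le_of_le_one_right ha0 (pow_le_one₀ (n := i) hq0 hq1.le)]

lemma qPochhammer_ratio_eq_exp {r x : ℝ} (hr0 : 0 ≤ r) (hr1 : r < 1) (hx : 0 ≤ x) (hq0 : 0 < q)
    (hq1 : q < 1) :
    (∏' i : ℕ, (1 - r * q ^ i)) / ∏' i : ℕ, (1 - r * q ^ (x + (i : ℝ))) =
      exp (-∑' n : ℕ, r ^ (n + 1) / (n + 1) * ((1 - (q ^ (n + 1)) ^ x) / (1 - q ^ (n + 1)))) := by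
  have hrx0 : 0 ≤ r * q ^ x := by positivity
  have hrx1 : r * q ^ x < 1 :=
    (mul_le_of_le_one_right hr0 (rpow_le_one hq0.le hq1.le hx)).trans_lt hr1
  have hshift : ∀ i : ℕ, r * q ^ (x + (i : ℝ)) = r * q ^ x * q ^ i := fun i => by
    rw [rpow_add hq0, rpow_natCast, mul_assoc]
  simp only [hshift]
  rw [tprod_one_sub_mul_pow_eq_exp hr0 hr1 hq0.le hq1,
    tprod_one_sub_mul_pow_eq_exp hrx0 hrx1 hq0.le hq1, ← exp_sub, ← neg_sub',
    ← (summable_pow_succ_div_mul_one_sub_pow hr0 hr1 hq0.le hq1).tsum_sub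
      (summable_pow_succ_div_mul_one_sub_pow hrx0 hrx1 hq0.le hq1)]
  congr 2
  refine tsum_congr fun n => ?_
  rw [mul_pow, rpow_pow_comm hq0.le, ← div_div, ← div_div]
  ring

end QPochhammer

/-- The ratio of infinite q-Pochhammer symbols `(r;q)_∞ / (r q^x; q)_∞` converges
to `(1-r)^x` as `q → 1⁻`. -/
theorem qPochhammer_ratio_tendsto (r x : ℝ) (hr : r ∈ Set.Ioo (0:ℝ) 1) (hx : 0 < x) :
    Filter.Tendsto
      (fun q : ℝ => (∏' i : ℕ, (1 - r * q ^ i)) / ∏' i : ℕ, (1 - r * q ^ (x + (i:ℝ))))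
      (nhdsWithin 1 (Set.Ioo (0:ℝ) 1)) (nhds ((1 - r) ^ x)) := by
  obtain ⟨hr0, hr1⟩ := hr
  have hlog : HasSum (fun n : ℕ => r ^ (n + 1) / (n + 1)) (-log (1 - r)) :=
    hasSum_pow_div_log_of_abs_lt_one (abs_lt.2 ⟨by linarith, hr1⟩)
  have hseries := tendsto_tsum_mul_one_sub_rpow_div_one_sub hlog.summable hx.le
  rw [tsum_mul_right, hlog.tsum_eq] at hseries
  have hlimit : Tendsto (fun q : ℝ => exp (-∑' n : ℕ, r ^ (n + 1) / (n + 1) *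
      ((1 - (q ^ (n + 1)) ^ x) / (1 - q ^ (n + 1))))) (𝓝[<] 1) (𝓝 ((1 - r) ^ x)) := by
    have hexp := (continuous_exp.tendsto _).comp hseries.neg
    rwa [neg_mul, neg_neg, ← rpow_def_of_pos (by linarith)] at hexp
  refine (hlimit.congr' ?_).mono_left (nhdsWithin_mono _ Ioo_subset_Iio_self)
  filter_upwards [Ioo_mem_nhdsLT one_pos] with q hq
  exact (qPochhammer_ratio_eq_exp hr0.le hr1 hx.le hq.1 hq.2).symm
end

section
/- For all real y and all q ∈ (0,1), |Γ(1+iy)| ≤ |Γ_q(1+iy)|, where Γ_q is the q-Gamma function. -/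
/-!
Both sides are limits of products of factors indexed by `j`. Euler's limit `Γ = lim GammaSeq`
gives `|Γ(1+iy)| ≤ lim_n ∏_{j ≤ n} (j+1)/|1+iy+j|`, while `|(1-q)^{-iy}| = 1` and
`q^{1+iy+j} = q^{j+1} e^{iθ}` with `θ = y log q` give
`|Γ_q(1+iy)| = ∏_j (1-q^{j+1})/|1-q^{j+1} e^{iθ}|`. The factors compare one by one: for `Q = q^m`,
`|1 - Q e^{iθ}|² = (1-Q)² + 2Q(1 - cos θ) ≤ (1-Q)² + Qθ²`, and `m² Q θ² = y² Q (log Q)² ≤ y² (1-Q)²`,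
the last inequality being `|t| ≤ |sinh t|` for `Q = e^{2t}`.
-/

/-- The q-Gamma function `Γ_q(z) = (q;q)_∞ / (q^z;q)_∞ · (1-q)^(1-z)`. -/
noncomputable def qGamma (q : ℝ) (z : ℂ) : ℂ :=
  ((∏' n : ℕ, (1 - (q:ℂ) ^ (n + 1))) / ∏' n : ℕ, (1 - (q:ℂ) ^ (z + n)))
    * (1 - (q:ℂ)) ^ ((1:ℂ) - z)

open Complex Filter Topology Finset
open scoped Nat

theorem Real.sq_le_sinh_sq (t : ℝ) : t ^ 2 ≤ Real.sinh t ^ 2 := by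
  rcases le_total 0 t with ht | ht
  · exact pow_le_pow_left₀ ht (Real.self_le_sinh_iff.2 ht) 2
  · have := Real.sinh_le_self_iff.2 ht
    nlinarith

theorem Real.sq_log_mul_le_sq_one_sub {x : ℝ} (hx : 0 < x) :
    Real.log x ^ 2 * x ≤ (1 - x) ^ 2 := by
  set t := Real.log x / 2
  have hx_eq : x = Real.exp t ^ 2 := by
    rw [← Real.exp_nat_mul, Nat.cast_ofNat, mul_div_cancel₀ _ two_ne_zero, Real.exp_log hx]
  have hsinh : 1 - x = -(2 * Real.exp t * Real.sinh t) := by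
    rw [hx_eq, Real.sinh_eq, Real.exp_neg]
    field_simp
    ring
  rw [hsinh, show Real.log x = 2 * t by ring, hx_eq]
  nlinarith [Real.sq_le_sinh_sq t, sq_nonneg (Real.exp t)]

theorem Complex.norm_one_sub_ofReal_mul_exp_sq (r θ : ℝ) :
    ‖1 - r * exp (θ * I)‖ ^ 2 = (1 - r) ^ 2 + 2 * r * (1 - Real.cos θ) := by
  rw [Complex.sq_norm, normSq_apply]
  simp only [sub_re, sub_im, one_re, one_im, re_ofReal_mul, im_ofReal_mul,
    exp_ofReal_mul_I_re, exp_ofReal_mul_I_im]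
  linear_combination r ^ 2 * Real.sin_sq_add_cos_sq θ

theorem sq_mul_norm_one_sub_pow_mul_exp_sq_le {q : ℝ} (hq : 0 < q) (y : ℝ) (m : ℕ) :
    (m : ℝ) ^ 2 * ‖1 - ((q ^ m : ℝ) : ℂ) * exp ((y * Real.log q : ℝ) * I)‖ ^ 2
      ≤ (1 - q ^ m) ^ 2 * (m ^ 2 + y ^ 2) := by
  have hcos : 2 * (1 - Real.cos (y * Real.log q)) ≤ (y * Real.log q) ^ 2 := by
    linarith [Real.one_sub_sq_div_two_le_cos (x := y * Real.log q)]
  have hlog := Real.sq_log_mul_le_sq_one_sub (pow_pos hq m)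
  rw [Real.log_pow] at hlog
  have hQ : 0 ≤ (m : ℝ) ^ 2 * q ^ m := by positivity
  rw [norm_one_sub_ofReal_mul_exp_sq]
  nlinarith [mul_le_mul_of_nonneg_left hcos hQ, mul_le_mul_of_nonneg_left hlog (sq_nonneg y)]

theorem Complex.ofReal_cpow_one_add_mul_I_add_natCast {q : ℝ} (hq : 0 < q) (y : ℝ) (n : ℕ) :
    (q : ℂ) ^ (1 + y * I + n) = ((q ^ (n + 1) : ℝ) : ℂ) * exp ((y * Real.log q : ℝ) * I) := by
  have hexp : (1 + y * I + n) * Real.log q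
      = ((n + 1 : ℕ) * Real.log q : ℝ) + (y * Real.log q : ℝ) * I := by
    push_cast; ring
  rw [cpow_def_of_ne_zero (ofReal_ne_zero.2 hq.ne'), ← ofReal_log hq.le, mul_comm, hexp, exp_add,
    ← ofReal_exp, Real.exp_nat_mul, Real.exp_log hq]

theorem Complex.norm_ofReal_cpow_one_add_mul_I_add_natCast {q : ℝ} (hq : 0 < q) (y : ℝ) (n : ℕ) :
    ‖(q : ℂ) ^ (1 + y * I + n)‖ = q ^ (n + 1) := by
  rw [ofReal_cpow_one_add_mul_I_add_natCast hq, norm_mul, norm_exp_ofReal_mul_I, mul_one,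
    norm_real, Real.norm_of_nonneg (by positivity)]

theorem succ_div_norm_le_norm_one_sub_div {q : ℝ} (hq0 : 0 < q) (hq1 : q < 1) (y : ℝ) (j : ℕ) :
    ((j : ℝ) + 1) / ‖1 + y * I + j‖
      ≤ ‖1 - (q : ℂ) ^ (j + 1)‖ / ‖1 - (q : ℂ) ^ (1 + y * I + j)‖ := by
  have hQ1 : q ^ (j + 1) < 1 := pow_lt_one₀ hq0.le hq1 j.succ_ne_zero
  have hnum : ‖1 - (q : ℂ) ^ (j + 1)‖ = 1 - q ^ (j + 1) := by
    rw [← ofReal_pow, ← ofReal_one, ← ofReal_sub, norm_real, Real.norm_of_nonneg (by linarith)]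
  have hden : 1 - q ^ (j + 1) ≤ ‖1 - (q : ℂ) ^ (1 + y * I + j)‖ := by
    simpa [norm_ofReal_cpow_one_add_mul_I_add_natCast hq0] using
      norm_sub_norm_le (1 : ℂ) ((q : ℂ) ^ (1 + y * I + j))
  have hz : ‖1 + y * I + j‖ ^ 2 = ((j : ℝ) + 1) ^ 2 + y ^ 2 := by
    rw [Complex.sq_norm, normSq_apply]
    simp only [add_re, one_re, mul_re, ofReal_re, I_re, mul_zero, ofReal_im, I_im, mul_one,
      sub_self, add_zero, natCast_re, add_im, one_im, mul_im, zero_add, natCast_im]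
    ring
  have hz0 : 0 < ‖1 + y * I + j‖ :=
    (norm_nonneg _).lt_of_ne' (sq_pos_iff.1 (by rw [hz]; positivity))
  rw [div_le_div_iff₀ hz0 (by linarith), hnum]
  refine le_of_pow_le_pow_left₀ two_ne_zero (by nlinarith) ?_
  rw [mul_pow, mul_pow, hz, ofReal_cpow_one_add_mul_I_add_natCast hq0]
  exact_mod_cast sq_mul_norm_one_sub_pow_mul_exp_sq_le hq0 y (j + 1)

theorem Complex.norm_GammaSeq_le_prod {s : ℂ} (hs : s.re = 1) (n : ℕ) :
    ‖GammaSeq s n‖ ≤ ∏ j ∈ range (n + 1), ((j : ℝ) + 1) / ‖s + j‖ := by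
  have hfact : ∏ j ∈ range (n + 1), ((j : ℝ) + 1) = (n + 1)! := by
    exact_mod_cast prod_range_add_one_eq_factorial (n + 1)
  rw [GammaSeq, norm_div, norm_mul, norm_prod, norm_natCast_cpow_of_re_ne_zero _ (by simp [hs]),
    hs, Real.rpow_one, prod_div_distrib, hfact, norm_natCast]
  gcongr
  push_cast [Nat.factorial_succ]
  nlinarith [Nat.cast_nonneg (α := ℝ) n !]

section NormedRing

variable {R : Type*} [NormedCommRing R] [NormOneClass R] [NormMulClass R] [CompleteSpace R]

theorem hasProd_norm_one_sub_of_summable {f : ℕ → R} (hf : Summable (‖f ·‖)) :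
    HasProd (‖1 - f ·‖) ‖∏' j, (1 - f j)‖ := by
  simp_rw [sub_eq_add_neg]
  exact (multipliable_one_add_of_summable (f := (-f ·)) (by simpa using hf)).hasProd.norm

theorem tprod_one_sub_ne_zero_of_summable {f : ℕ → R} (hf : Summable (‖f ·‖))
    (hf1 : ∀ j, f j ≠ 1) : ∏' j, (1 - f j) ≠ 0 := by
  simp_rw [sub_eq_add_neg]
  exact tprod_one_add_ne_zero_of_summable (fun j ↦ by simpa [← sub_eq_add_neg, sub_eq_zero]
    using (hf1 j).symm) (by simpa using hf)

theorem tendsto_prod_range_norm_one_sub_div {f g : ℕ → R} (hf : Summable (‖f ·‖))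
    (hg : Summable (‖g ·‖)) (hg1 : ∀ j, g j ≠ 1) :
    Tendsto (fun n ↦ ∏ j ∈ range n, ‖1 - f j‖ / ‖1 - g j‖) atTop
      (𝓝 (‖∏' j, (1 - f j)‖ / ‖∏' j, (1 - g j)‖)) := by
  simp_rw [prod_div_distrib]
  exact (hasProd_norm_one_sub_of_summable hf).tendsto_prod_nat.div
    (hasProd_norm_one_sub_of_summable hg).tendsto_prod_nat
    (norm_ne_zero_iff.2 (tprod_one_sub_ne_zero_of_summable hg hg1))

end NormedRing

theorem norm_qGamma {q : ℝ} (hq1 : q < 1) (z : ℂ) :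
    ‖qGamma q z‖ = ‖∏' n : ℕ, (1 - (q : ℂ) ^ (n + 1))‖ / ‖∏' n : ℕ, (1 - (q : ℂ) ^ (z + n))‖
      * (1 - q) ^ (1 - z.re) := by
  rw [qGamma, norm_mul, norm_div, show (1 : ℂ) - q = ((1 - q : ℝ) : ℂ) by push_cast; ring,
    norm_cpow_eq_rpow_re_of_pos (by linarith)]
  simp

/-- For all real `y` and `q ∈ (0,1)`, `|Γ(1+iy)| ≤ |Γ_q(1+iy)|`. -/
theorem abs_Gamma_le_abs_qGamma (y q : ℝ) (hq : q ∈ Set.Ioo (0:ℝ) 1) :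
    ‖Complex.Gamma (1 + y * Complex.I)‖
      ≤ ‖qGamma q (1 + y * Complex.I)‖ := by
  obtain ⟨hq0, hq1⟩ := hq
  have hgeom : Summable (fun n : ℕ ↦ q ^ (n + 1)) := by
    simpa [pow_succ] using (summable_geometric_of_lt_one hq0.le hq1).mul_right q
  have hnum : Summable (fun n : ℕ ↦ ‖(q : ℂ) ^ (n + 1)‖) := by
    simpa [abs_of_pos hq0] using hgeom
  have hden : Summable (fun n : ℕ ↦ ‖(q : ℂ) ^ (1 + y * I + n)‖) := by
    simpa [norm_ofReal_cpow_one_add_mul_I_add_natCast hq0] using hgeom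
  have hden1 (n : ℕ) : (q : ℂ) ^ (1 + y * I + n) ≠ 1 := fun h ↦ by
    have := congrArg norm h
    rw [norm_ofReal_cpow_one_add_mul_I_add_natCast hq0, norm_one] at this
    exact (pow_lt_one₀ hq0.le hq1 n.succ_ne_zero).ne this
  have hqGamma : Tendsto (fun n ↦ ∏ j ∈ range n,
      ‖1 - (q : ℂ) ^ (j + 1)‖ / ‖1 - (q : ℂ) ^ (1 + y * I + j)‖) atTop
      (𝓝 ‖qGamma q (1 + y * I)‖) := by
    rw [norm_qGamma hq1]
    simpa using tendsto_prod_range_norm_one_sub_div hnum hden hden1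
  refine le_of_tendsto_of_tendsto' (GammaSeq_tendsto_Gamma _).norm
    (hqGamma.comp (tendsto_add_atTop_nat 1)) fun n ↦ ?_
  calc ‖GammaSeq (1 + y * I) n‖
      ≤ ∏ j ∈ range (n + 1), ((j : ℝ) + 1) / ‖1 + y * I + j‖ := norm_GammaSeq_le_prod (by simp) n
    _ ≤ _ := prod_le_prod (fun j _ ↦ by positivity)
      fun j _ ↦ succ_div_norm_le_norm_one_sub_div hq0 hq1 y j
end

section
/- For all Q ∈ (0,1) and all real Y, the inequality Y²(1−Q)² ≥ 2Q(1 − cos(Y log Q)) holds. -/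
/-! Since `1 - cos x ≤ x² / 2`, it suffices that `Q (log Q)² ≤ (1 - Q)²`. Writing `Q = exp t`,
`(1 - Q)² = Q (2 sinh (t / 2))²`, so this is `|t / 2| ≤ |sinh (t / 2)|`. -/

open Real

lemma Real.sq_le_sinh_sq_s3 (x : ℝ) : x ^ 2 ≤ sinh x ^ 2 :=
  sq_le_sq.mpr <| (abs_sinh x).symm ▸ self_le_sinh_iff.mpr (abs_nonneg x)

lemma Real.one_sub_exp_sq_eq (t : ℝ) : (1 - exp t) ^ 2 = exp t * (2 * sinh (t / 2)) ^ 2 := by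
  have hexp : exp t = exp (t / 2) ^ 2 := by rw [← exp_nat_mul]; ring_nf
  rw [sinh_eq, exp_neg, hexp]
  field_simp
  ring

lemma Real.exp_mul_sq_le_one_sub_exp_sq (t : ℝ) : exp t * t ^ 2 ≤ (1 - exp t) ^ 2 := by
  have h : t ^ 2 ≤ (2 * sinh (t / 2)) ^ 2 := by nlinarith [sq_le_sinh_sq_s3 (t / 2)]
  rw [one_sub_exp_sq_eq]
  exact mul_le_mul_of_nonneg_left h (exp_pos t).le

lemma Real.mul_log_sq_le_one_sub_sq {Q : ℝ} (hQ : 0 < Q) : Q * log Q ^ 2 ≤ (1 - Q) ^ 2 := by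
  simpa only [exp_log hQ] using exp_mul_sq_le_one_sub_exp_sq (log Q)

theorem beta_fpp_key_inequality (Q Y : ℝ) (hQ : Q ∈ Set.Ioo (0:ℝ) 1) :
    Y ^ 2 * (1 - Q) ^ 2 ≥ 2 * Q * (1 - Real.cos (Y * Real.log Q)) := by
  have hcos : 1 - cos (Y * log Q) ≤ (Y * log Q) ^ 2 / 2 := by
    linarith [one_sub_sq_div_two_le_cos (x := Y * log Q)]
  calc 2 * Q * (1 - cos (Y * log Q))
      ≤ 2 * Q * ((Y * log Q) ^ 2 / 2) := by have := hQ.1; gcongr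
    _ = Y ^ 2 * (Q * log Q ^ 2) := by ring
    _ ≤ Y ^ 2 * (1 - Q) ^ 2 := by gcongr; exact mul_log_sq_le_one_sub_sq hQ.1
end

section
/- For all x > 0, the polygamma functions satisfy Ψ₄(x)Ψ₂(x) > Ψ₃(x)², where Ψ_n denotes the n-th polygamma function (the n-th derivative of the digamma function). -/
/-!
With the positive kernel `K_x(t) = e^{-xt} / (1 - e^{-t})` on `(0, ∞)` one has
`Ψ_n(x) = (-1)^(n+1) M_n` for the moments `M_n = ∫ t^n K_x(t) dt`, so the claim reads
`M₃² < M₄ M₂`. This is the Cauchy–Schwarz inequality for the measure `t² K_x(t) dt` applied to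
`1` and `t`, strict because `t` is not constant.
-/

/-- The n-th polygamma function, via its integral representation
`Ψ_n(x) = −∫_0^∞ (−t)^n e^{−xt}/(1−e^{−t}) dt` (valid for `n ≥ 1`, `x > 0`). -/
noncomputable def polygamma (n : ℕ) (x : ℝ) : ℝ :=
  -∫ t in Set.Ioi (0:ℝ), (-t) ^ n * Real.exp (-x * t) / (1 - Real.exp (-t))

open MeasureTheory Set Real

theorem setIntegral_Ioi_pos {f : ℝ → ℝ} {a b : ℝ} (hfi : IntegrableOn f (Ioi a))
    (hf : ∀ t > a, 0 ≤ f t) (hpos : ∀ t > b, 0 < f t) : 0 < ∫ t in Ioi a, f t := by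
  have hf_ae : 0 ≤ᵐ[volume.restrict (Ioi a)] f :=
    (ae_restrict_iff' measurableSet_Ioi).2 (.of_forall hf)
  rw [setIntegral_pos_iff_support_of_nonneg_ae hf_ae hfi]
  have hsub : Ioi (max a b) ⊆ Function.support f ∩ Ioi a := fun t (ht : max a b < t) =>
    ⟨(hpos t (max_lt_iff.1 ht).2).ne', (max_lt_iff.1 ht).1⟩
  exact (by simp : (0 : ENNReal) < volume (Ioi (max a b))).trans_le (measure_mono hsub)

theorem sq_setIntegral_pow_succ_mul_lt {g : ℝ → ℝ} (hg : ∀ t > 0, 0 < g t) (k : ℕ)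
    (h₀ : IntegrableOn (fun t => t ^ k * g t) (Ioi 0))
    (h₁ : IntegrableOn (fun t => t ^ (k + 1) * g t) (Ioi 0))
    (h₂ : IntegrableOn (fun t => t ^ (k + 2) * g t) (Ioi 0)) :
    (∫ t in Ioi 0, t ^ (k + 1) * g t) ^ 2 <
      (∫ t in Ioi 0, t ^ (k + 2) * g t) * ∫ t in Ioi 0, t ^ k * g t := by
  set A := ∫ t in Ioi 0, t ^ k * g t
  set B := ∫ t in Ioi 0, t ^ (k + 1) * g t
  set C := ∫ t in Ioi 0, t ^ (k + 2) * g t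
  have hA : 0 < A := setIntegral_Ioi_pos h₀ (fun t ht => (mul_pos (pow_pos ht k) (hg t ht)).le)
    fun t ht => mul_pos (pow_pos ht k) (hg t ht)
  -- Expand `∫ (A t - B)² tᵏ g ≥ 0`, the discriminant argument of Cauchy–Schwarz.
  have hexpand : (fun t => (A * t - B) ^ 2 * (t ^ k * g t)) = fun t =>
      A ^ 2 * (t ^ (k + 2) * g t) - 2 * A * B * (t ^ (k + 1) * g t) + B ^ 2 * (t ^ k * g t) := by
    ext t; ring
  have h₂₁ : IntegrableOn
      (fun t => A ^ 2 * (t ^ (k + 2) * g t) - 2 * A * B * (t ^ (k + 1) * g t)) (Ioi 0) :=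
    (h₂.const_mul _).sub (h₁.const_mul _)
  have hquad : ∫ t in Ioi 0, (A * t - B) ^ 2 * (t ^ k * g t) = A * (C * A - B ^ 2) := by
    rw [hexpand, integral_add h₂₁ (h₀.const_mul _), integral_sub (h₂.const_mul _) (h₁.const_mul _), integral_const_mul, integral_const_mul,
      integral_const_mul]
    ring
  have hpos : 0 < ∫ t in Ioi 0, (A * t - B) ^ 2 * (t ^ k * g t) := by
    refine setIntegral_Ioi_pos (b := max 0 (B / A)) ?_ (fun t ht => ?_) fun t ht => ?_
    · rw [hexpand]
      exact h₂₁.add (h₀.const_mul _)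
    · exact mul_nonneg (sq_nonneg _) (mul_pos (pow_pos ht k) (hg t ht)).le
    · obtain ⟨ht₀, htB⟩ := max_lt_iff.1 ht
      have : B < A * t := by rwa [div_lt_iff₀' hA] at htB
      exact mul_pos (pow_pos (sub_pos.2 this) 2) (mul_pos (pow_pos ht₀ k) (hg t ht₀))
  rw [hquad] at hpos
  exact sub_pos.1 (pos_of_mul_pos_right hpos hA.le)

noncomputable def polygammaKernel (x t : ℝ) : ℝ :=
  exp (-x * t) / (1 - exp (-t))

theorem polygamma_eq_neg_one_pow_mul_setIntegral (n : ℕ) (x : ℝ) :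
    polygamma n x = (-1) ^ (n + 1) * ∫ t in Ioi 0, t ^ n * polygammaKernel x t := by
  have h : (fun t => (-t) ^ n * exp (-x * t) / (1 - exp (-t))) =
      fun t => (-1) ^ n * (t ^ n * polygammaKernel x t) := by
    ext t
    rw [polygammaKernel, neg_pow]
    ring
  rw [polygamma, h, integral_const_mul]
  ring

theorem one_sub_exp_neg_pos {t : ℝ} (ht : 0 < t) : 0 < 1 - exp (-t) :=
  sub_pos.2 (exp_lt_one_iff.2 (neg_neg_of_pos ht))

theorem polygammaKernel_pos (x : ℝ) {t : ℝ} (ht : 0 < t) : 0 < polygammaKernel x t :=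
  div_pos (exp_pos _) (one_sub_exp_neg_pos ht)

theorem mul_polygammaKernel_le (x : ℝ) {t : ℝ} (ht : 0 < t) :
    t * polygammaKernel x t ≤ (1 + t) * exp (-x * t) := by
  have h : (1 + t) * exp (-t) ≤ 1 := by
    rw [exp_neg, ← div_eq_mul_inv, div_le_one (exp_pos t)]
    linarith [add_one_le_exp t]
  rw [polygammaKernel, ← mul_div_assoc, div_le_iff₀ (one_sub_exp_neg_pos ht)]
  nlinarith [mul_nonneg (exp_pos (-x * t)).le (sub_nonneg.2 h)]

theorem integrableOn_pow_mul_exp_neg_mul {x : ℝ} (hx : 0 < x) (m : ℕ) :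
    IntegrableOn (fun t => t ^ m * exp (-x * t)) (Ioi 0) := by
  simpa [rpow_natCast, rpow_one] using integrableOn_rpow_mul_exp_neg_mul_rpow
    (s := m) (p := 1) (neg_one_lt_zero.trans_le (Nat.cast_nonneg m)) one_pos hx

theorem integrableOn_pow_succ_mul_polygammaKernel {x : ℝ} (hx : 0 < x) (m : ℕ) :
    IntegrableOn (fun t => t ^ (m + 1) * polygammaKernel x t) (Ioi 0) := by
  have hcont : ContinuousOn (fun t => t ^ (m + 1) * polygammaKernel x t) (Ioi 0) := by
    unfold polygammaKernel
    exact ContinuousOn.mul (by fun_prop) <| ContinuousOn.div (by fun_prop) (by fun_prop)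
      fun t ht => (one_sub_exp_neg_pos ht).ne'
  refine ((integrableOn_pow_mul_exp_neg_mul hx m).add
    (integrableOn_pow_mul_exp_neg_mul hx (m + 1))).mono'
    (hcont.aestronglyMeasurable measurableSet_Ioi) ?_
  refine (ae_restrict_iff' measurableSet_Ioi).2 (.of_forall fun t (ht : 0 < t) => ?_)
  rw [Real.norm_of_nonneg (mul_pos (pow_pos ht _) (polygammaKernel_pos x ht)).le, pow_succ,
    mul_assoc]
  calc t ^ m * (t * polygammaKernel x t) ≤ t ^ m * ((1 + t) * exp (-x * t)) :=
        mul_le_mul_of_nonneg_left (mul_polygammaKernel_le x ht) (pow_pos ht m).le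
    _ = t ^ m * exp (-x * t) + t ^ (m + 1) * exp (-x * t) := by ring

/-- For all `x > 0`, `Ψ₄(x)Ψ₂(x) > Ψ₃(x)²`. -/
theorem polygamma_four_two_gt_three_sq (x : ℝ) (hx : 0 < x) :
    polygamma 3 x ^ 2 < polygamma 4 x * polygamma 2 x := by
  have h := sq_setIntegral_pow_succ_mul_lt (fun t ht => polygammaKernel_pos x ht) 2
    (integrableOn_pow_succ_mul_polygammaKernel hx 1)
    (integrableOn_pow_succ_mul_polygammaKernel hx 2)
    (integrableOn_pow_succ_mul_polygammaKernel hx 3)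
  simp only [polygamma_eq_neg_one_pow_mul_setIntegral]
  norm_num at h ⊢
  linarith
end

section
/- For all α, β, θ > 0: (Ψ₂(θ+α+β) − Ψ₂(θ+α))(Ψ₁(θ+α+β) − Ψ₁(θ)) − (Ψ₁(θ+α+β) − Ψ₁(θ+α))(Ψ₂(θ+α+β) − Ψ₂(θ)) > 0, where Ψ₁, Ψ₂ are the trigamma and tetragamma functions. Equivalently, h'''(θ) > 0 where h'''(θ) = Ψ₂(θ+α) − Ψ₂(α+β+θ) + [(Ψ₁(α+θ) − Ψ₁(α+β+θ))/(Ψ₁(θ) − Ψ₁(α+β+θ))](Ψ₂(α+β+θ) − Ψ₂(θ)). -/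
/-- The trigamma function `Ψ₁(x) = Σ_{n≥0} 1/(n+x)²`. -/
noncomputable def trigamma (x : ℝ) : ℝ := ∑' n : ℕ, 1 / ((n:ℝ) + x) ^ 2

/-- The tetragamma function `Ψ₂(x) = −Σ_{n≥0} 2/(n+x)³`. -/
noncomputable def tetragamma (x : ℝ) : ℝ := -∑' n : ℕ, 2 / ((n:ℝ) + x) ^ 3

/-!
Since `Ψ₁` is strictly decreasing, the claim is the strict three-chord inequality expressing
concavity of `Ψ₂ ∘ Ψ₁⁻¹`. By Cauchy's mean value theorem on `[θ, θ+α]` and `[θ+α, θ+α+β]`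
it suffices that `Ψ₃ / Ψ₂` is strictly increasing. With `ζ(k, x) = Σ_{n≥0} (n+x)^(-k)` we have
`Ψ₂ = -2 ζ(3, ·)` and `Ψ₃ = 6 ζ(4, ·)`, so this says `ζ(4, x) ζ(3, y) < ζ(4, y) ζ(3, x)` for
`y < x`. Expanding both products as double series over `(m, n)`, the difference is positive
already after pairing the terms `(m, n)` and `(n, m)`.
-/

open Set

theorem cross_chord_pos_of_strictMonoOn_deriv_div {f g f' g' : ℝ → ℝ} {a b c : ℝ}
    (hab : a < b) (hbc : b < c)
    (hf : ∀ x ∈ Icc a c, HasDerivAt f (f' x) x) (hg : ∀ x ∈ Icc a c, HasDerivAt g (g' x) x)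
    (hf' : ∀ x ∈ Icc a c, f' x < 0) (hr : StrictMonoOn (fun x => g' x / f' x) (Icc a c)) :
    0 < (g c - g b) * (f c - f a) - (f c - f b) * (g c - g a) := by
  have hfc : ContinuousOn f (Icc a c) := fun x hx => (hf x hx).continuousAt.continuousWithinAt
  have hgc : ContinuousOn g (Icc a c) := fun x hx => (hg x hx).continuousAt.continuousWithinAt
  have hanti : StrictAntiOn f (Icc a c) := strictAntiOn_of_deriv_neg (convex_Icc a c) hfc
    fun x hx => by
      rw [interior_Icc] at hx
      rw [(hf x (Ioo_subset_Icc_self hx)).deriv]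
      exact hf' x (Ioo_subset_Icc_self hx)
  have chord : ∀ u v, a ≤ u → u < v → v ≤ c →
      ∃ ξ ∈ Icc a c, u < ξ ∧ ξ < v ∧ g v - g u = (f v - f u) * (g' ξ / f' ξ) := by
    intro u v hau huv hvc
    have hsub : Icc u v ⊆ Icc a c := Icc_subset_Icc hau hvc
    obtain ⟨ξ, ⟨huξ, hξv⟩, hξ⟩ := exists_ratio_hasDerivAt_eq_ratio_slope f f' huv
      (hfc.mono hsub) (fun x hx => hf x (hsub (Ioo_subset_Icc_self hx))) g g'
      (hgc.mono hsub) (fun x hx => hg x (hsub (Ioo_subset_Icc_self hx)))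
    have hξI : ξ ∈ Icc a c := ⟨hau.trans huξ.le, hξv.le.trans hvc⟩
    refine ⟨ξ, hξI, huξ, hξv, ?_⟩
    rw [mul_div_assoc', eq_div_iff (hf' ξ hξI).ne, hξ]
  obtain ⟨η, hη, -, hηb, hgab⟩ := chord a b le_rfl hab hbc.le
  obtain ⟨ξ, hξ, hbξ, -, hgbc⟩ := chord b c hab.le hbc le_rfl
  have hfab : f b < f a := hanti (left_mem_Icc.2 (hab.trans hbc).le) ⟨hab.le, hbc.le⟩ hab
  have hfbc : f c < f b := hanti ⟨hab.le, hbc.le⟩ (right_mem_Icc.2 (hab.trans hbc).le) hbc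
  have hrηξ : g' η / f' η < g' ξ / f' ξ := hr hη hξ (hηb.trans hbξ)
  have key : (g c - g b) * (f c - f a) - (f c - f b) * (g c - g a)
      = (f c - f b) * (f b - f a) * (g' ξ / f' ξ - g' η / f' η) := by
    linear_combination (f b - f a) * hgbc - (f c - f b) * hgab
  rw [key]
  exact mul_pos (mul_pos_of_neg_of_neg (by linarith) (by linarith)) (by linarith)

theorem HasSum.pos_of_add_swap_pos {α : Type*} [Nonempty α] {h : α × α → ℝ} {s : ℝ}
    (hs : HasSum h s) (hpos : ∀ z : α × α, 0 < h z + h z.swap) : 0 < s := by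
  have hswap : HasSum (fun z : α × α => h z.swap) s := (Equiv.prodComm α α).hasSum_iff.2 hs
  have h2s : 0 < s + s := hasSum_lt (fun z => (hpos z).le) (hpos (Classical.arbitrary _))
    hasSum_zero (hs.add hswap)
  linarith

theorem add_sub_div_mul_add_pow_pos {p q d : ℝ} (hp : 0 < p) (hq : 0 < q) (hd : 0 < d) (j : ℕ) :
    0 < (q + d - p) / (p * (q + d)) ^ j + (p + d - q) / (q * (p + d)) ^ j := by
  wlog hpq : p ≤ q generalizing p q
  · linarith [this hq hp (le_of_not_ge hpq)]
  -- the summand with the smaller denominator has the positive numerator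
  have hden : (p * (q + d)) ^ j ≤ (q * (p + d)) ^ j :=
    pow_le_pow_left₀ (by positivity) (by nlinarith) j
  calc 0 < (q + d - p + (p + d - q)) / (q * (p + d)) ^ j := by
        apply div_pos <;> [linarith; positivity]
    _ = (q + d - p) / (q * (p + d)) ^ j + (p + d - q) / (q * (p + d)) ^ j := add_div _ _ _
    _ ≤ _ := by gcongr; linarith

theorem one_div_pow_mul_sub_one_div_pow_mul {p q : ℝ} (hp : p ≠ 0) (hq : q ≠ 0) (k : ℕ) :
    1 / (p ^ (k + 1) * q ^ k) - 1 / (q ^ (k + 1) * p ^ k) = (q - p) / (p * q) ^ (k + 1) := by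
  field_simp
  ring

theorem hasDerivAt_one_div_add_pow (a : ℝ) (k : ℕ) {x : ℝ} (hx : a + x ≠ 0) :
    HasDerivAt (fun y => 1 / (a + y) ^ k) (-k * (1 / (a + x) ^ (k + 1))) x := by
  have h := (((hasDerivAt_id' x).const_add a).fun_pow k).fun_inv (pow_ne_zero k hx)
  simp only [one_div]
  refine h.congr_deriv ?_
  rcases k with _ | k
  · simp
  · rw [Nat.add_sub_cancel]
    field_simp
    ring

theorem summable_one_div_nat_add_pow {x : ℝ} (hx : 0 < x) {k : ℕ} (hk : 2 ≤ k) :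
    Summable fun n : ℕ => 1 / ((n : ℝ) + x) ^ k := by
  have hk' : (1 : ℝ) < k := by exact_mod_cast hk
  refine ((Real.summable_one_div_nat_add_rpow x k).2 hk').congr fun n => ?_
  rw [abs_of_pos (by positivity), Real.rpow_natCast]

/-- The Hurwitz zeta function `ζ(k, x)` at an integer `k`; `Ψ_{k-1} = (-1)^k (k-1)! ζ(k, ·)`. -/
noncomputable def hurwitzSeries (k : ℕ) (x : ℝ) : ℝ := ∑' n : ℕ, 1 / ((n : ℝ) + x) ^ k

theorem hurwitzSeries_pos {k : ℕ} (hk : 2 ≤ k) {x : ℝ} (hx : 0 < x) : 0 < hurwitzSeries k x :=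
  (summable_one_div_nat_add_pow hx hk).tsum_pos (fun n => by positivity) 0 (by positivity)

theorem hasDerivAt_hurwitzSeries {k : ℕ} (hk : 2 ≤ k) {x : ℝ} (hx : 0 < x) :
    HasDerivAt (hurwitzSeries k) (-k * hurwitzSeries (k + 1) x) x := by
  have hx2 : 0 < x / 2 := half_pos hx
  have hderiv := hasDerivAt_tsum_of_isPreconnected
    (g := fun (n : ℕ) (y : ℝ) => 1 / ((n : ℝ) + y) ^ k)
    (g' := fun (n : ℕ) (y : ℝ) => -k * (1 / ((n : ℝ) + y) ^ (k + 1)))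
    ((summable_one_div_nat_add_pow hx2 (k := k + 1) (by omega)).mul_left (k : ℝ))
    isOpen_Ioi isPreconnected_Ioi
    (fun n y hy => hasDerivAt_one_div_add_pow _ k (by have := hx2.trans hy; positivity))
    (fun n y hy => by
      have hy0 : 0 < y := hx2.trans hy
      rw [norm_mul, norm_neg, Real.norm_natCast, Real.norm_of_nonneg (by positivity)]
      exact mul_le_mul_of_nonneg_left (by gcongr; exact le_of_lt hy) k.cast_nonneg)
    (mem_Ioi.2 (half_lt_self hx)) (summable_one_div_nat_add_pow hx hk)
    (mem_Ioi.2 (half_lt_self hx))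
  rwa [tsum_mul_left] at hderiv

theorem hasSum_hurwitzSeries_mul {j k : ℕ} (hj : 2 ≤ j) (hk : 2 ≤ k) {x y : ℝ} (hx : 0 < x)
    (hy : 0 < y) :
    HasSum (fun z : ℕ × ℕ => 1 / ((z.1 : ℝ) + y) ^ j * (1 / ((z.2 : ℝ) + x) ^ k))
      (hurwitzSeries j y * hurwitzSeries k x) := by
  have hsy := summable_one_div_nat_add_pow hy hj
  have hsx := summable_one_div_nat_add_pow hx hk
  have hprod := hsy.mul_of_nonneg hsx (fun n => by positivity) (fun n => by positivity)
  have hsum := hsy.hasSum.mul hsx.hasSum hprod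
  exact hsum

theorem hurwitzSeries_succ_mul_lt {k : ℕ} (hk : 2 ≤ k) {x y : ℝ} (hy : 0 < y) (hyx : y < x) :
    hurwitzSeries (k + 1) x * hurwitzSeries k y < hurwitzSeries (k + 1) y * hurwitzSeries k x := by
  have hx : 0 < x := hy.trans hyx
  rw [← sub_pos]
  refine ((hasSum_hurwitzSeries_mul (by omega) hk hx hy).sub
    (hasSum_hurwitzSeries_mul (by omega) hk hy hx)).pos_of_add_swap_pos ?_
  rintro ⟨m, n⟩
  have hm : 0 < (m : ℝ) + y := by positivity
  have hn : 0 < (n : ℝ) + y := by positivity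
  have hd : 0 < x - y := sub_pos.2 hyx
  have em : (m : ℝ) + x = (m + y) + (x - y) := by ring
  have en : (n : ℝ) + x = (n + y) + (x - y) := by ring
  simp only [Prod.swap, one_div_mul_one_div]
  rw [em, en]
  linarith [one_div_pow_mul_sub_one_div_pow_mul hm.ne' (by positivity : (n : ℝ) + y + (x - y) ≠ 0) k,
    one_div_pow_mul_sub_one_div_pow_mul hn.ne' (by positivity : (m : ℝ) + y + (x - y) ≠ 0) k,
    add_sub_div_mul_add_pow_pos hm hn hd (k + 1)]

theorem trigamma_eq_hurwitzSeries : trigamma = hurwitzSeries 2 := rfl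

theorem tetragamma_eq_hurwitzSeries : tetragamma = fun x => -2 * hurwitzSeries 3 x := by
  ext x
  simp only [tetragamma, hurwitzSeries, ← tsum_mul_left, mul_one_div, neg_div, ← tsum_neg]

theorem hasDerivAt_trigamma {x : ℝ} (hx : 0 < x) : HasDerivAt trigamma (tetragamma x) x := by
  rw [trigamma_eq_hurwitzSeries, tetragamma_eq_hurwitzSeries]
  exact_mod_cast hasDerivAt_hurwitzSeries le_rfl hx

theorem hasDerivAt_tetragamma {x : ℝ} (hx : 0 < x) :
    HasDerivAt tetragamma (6 * hurwitzSeries 4 x) x := by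
  rw [tetragamma_eq_hurwitzSeries]
  refine ((hasDerivAt_hurwitzSeries (k := 3) (by norm_num) hx).const_mul (-2)).congr_deriv ?_
  norm_num
  ring

theorem strictMonoOn_deriv_tetragamma_div_deriv_trigamma :
    StrictMonoOn (fun x => 6 * hurwitzSeries 4 x / tetragamma x) (Ioi 0) := by
  intro y (hy : 0 < y) x (hx : 0 < x) hyx
  have key := hurwitzSeries_succ_mul_lt (k := 3) (by norm_num) hy hyx
  have e : ∀ t, 6 * hurwitzSeries 4 t / (-2 * hurwitzSeries 3 t)
      = -3 * (hurwitzSeries 4 t / hurwitzSeries 3 t) := fun t => by ring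
  simp only [tetragamma_eq_hurwitzSeries, e]
  linarith [(div_lt_div_iff₀ (hurwitzSeries_pos (by norm_num) hx)
    (hurwitzSeries_pos (by norm_num) hy)).2 key]

/-- Positivity of `h'''(θ)` for the Beta RWRE, in cross-product form. -/
theorem h_third_derivative_pos (α β θ : ℝ) (hα : 0 < α) (hβ : 0 < β) (hθ : 0 < θ) :
    0 < (tetragamma (θ + α + β) - tetragamma (θ + α)) * (trigamma (θ + α + β) - trigamma θ)
        - (trigamma (θ + α + β) - trigamma (θ + α))
            * (tetragamma (θ + α + β) - tetragamma θ) := by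
  have hpos : ∀ x ∈ Icc θ (θ + α + β), 0 < x := fun x hx => hθ.trans_le hx.1
  refine cross_chord_pos_of_strictMonoOn_deriv_div (b := θ + α) (by linarith) (by linarith)
    (fun x hx => hasDerivAt_trigamma (hpos x hx)) (fun x hx => hasDerivAt_tetragamma (hpos x hx))
    (fun x hx => ?_) (strictMonoOn_deriv_tetragamma_div_deriv_trigamma.mono hpos)
  rw [tetragamma_eq_hurwitzSeries]
  linarith [hurwitzSeries_pos (k := 3) (by norm_num) (hpos x hx)]
end

section
/- Fix α = β = 1 and θ > 0. For all φ ∈ (0, π), Im[(1 − e^{iφ})² / (θ e^{iφ} + 1)] < 0; equivalently, the derivative d/dφ Re[h(θe^{iφ})] is positive for φ ∈ (0,π), so the circle of radius θ is steep-descent for −Re[h]. -/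
/-! On the unit circle `(1 - w)² = (w + w̄ - 2) w = 2 (cos φ - 1) w`, and
`Im (w / (θ w + 1)) = Im w / |θ w + 1|²` because `w · conj (θ w + 1) = θ |w|² + w`.
Hence the imaginary part equals `2 (cos φ - 1) sin φ / |θ e^{iφ} + 1|²`, which is negative
on `(0, π)`. -/

open Complex

theorem Complex.one_sub_exp_mul_I_sq (φ : ℝ) :
    (1 - exp (φ * I)) ^ 2 = ((2 * (Real.cos φ - 1) : ℝ) : ℂ) * exp (φ * I) := by
  have hunit : exp (φ * I) * exp (-(φ * I)) = 1 := by rw [← exp_add, add_neg_cancel, exp_zero]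
  have hcos : ((Real.cos φ : ℝ) : ℂ) = (exp (φ * I) + exp (-(φ * I))) / 2 := by
    rw [ofReal_cos, cos]
    ring_nf
  push_cast [hcos]
  linear_combination -hunit

theorem Complex.im_div_ofReal_mul_add_one (θ : ℝ) (w : ℂ) :
    (w / (θ * w + 1)).im = w.im / normSq (θ * w + 1) := by
  rw [div_im]
  simp only [add_re, add_im, re_ofReal_mul, im_ofReal_mul, one_re, one_im]
  ring

theorem circle_steep_descent_uniform (θ : ℝ) (hθ : 0 < θ) (φ : ℝ)
    (hφ : φ ∈ Set.Ioo 0 Real.pi) :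
    ((1 - Complex.exp (φ * Complex.I)) ^ 2
      / ((θ:ℂ) * Complex.exp (φ * Complex.I) + 1)).im < 0 := by
  obtain ⟨hφ0, hφπ⟩ := hφ
  have hsin : 0 < Real.sin φ := Real.sin_pos_of_pos_of_lt_pi hφ0 hφπ
  have hcos : Real.cos φ < 1 := by
    simpa using Real.cos_lt_cos_of_nonneg_of_le_pi le_rfl hφπ.le hφ0
  have hden : θ * exp (φ * I) + 1 ≠ 0 := fun h => by
    have := congrArg im h
    simp only [add_im, im_ofReal_mul, exp_ofReal_mul_I_im, one_im, zero_im, add_zero] at this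
    exact (mul_pos hθ hsin).ne' this
  rw [one_sub_exp_mul_I_sq, mul_div_assoc, im_ofReal_mul, im_div_ofReal_mul_add_one,
    exp_ofReal_mul_I_im]
  exact mul_neg_of_neg_of_pos (by linarith) (div_pos hsin (normSq_pos.mpr hden))
end

section
/- For all α, β, θ > 0 and all y > 0, the following inequality between ratios holds: (Ψ₁(θ) − Ψ₁(θ+α))/(Φ(θ) − Φ(θ+α)) > (Ψ₁(θ+α) − Ψ₁(θ+α+β))/(Φ(θ+α) − Φ(θ+α+β)), where Φ(x) = Σ_{n≥0} 1/((n+x)² + y²) and Ψ₁ is the trigamma function. Consequently the vertical line through θ is steep-descent for Re[h]: Im[h'(θ+iy)] > 0 for y > 0. -/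
/-- `Φ(x) = Σ_{n≥0} 1/((n+x)² + y²)`. -/
noncomputable def Phi (y x : ℝ) : ℝ := ∑' n : ℕ, 1 / (((n:ℝ) + x) ^ 2 + y ^ 2)

/-!
By Cauchy's mean value theorem each side equals `Ψ₁'(ξ) / Φ'(ξ)` for some `ξ` in its interval,
so it suffices that `Φ' / Ψ₁'` is strictly increasing on `(0, ∞)`. Termwise,
`-Φ'(x) = 2 ∑ w(n + x) / (n + x)³` with `w(u) = (u² / (u² + y²))²` strictly increasing, while
`-Ψ₁'(x) = 2 ∑ 1 / (n + x)³`; so `Φ' / Ψ₁'` is the average of `w(n + x)` against the weights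
`(n + x)⁻³`. Cross-multiplied, the monotonicity becomes the positivity of a double series, whose
`(n, m)` and `(m, n)` terms add up to something positive because `w` is increasing and the
weight ratio `((n + s) / (n + t))³` increases with `n` for `s < t`.
-/

open Set

theorem exists_mem_Ioo_sub_div_sub_eq_div {f g f' g' : ℝ → ℝ} {a b : ℝ} (hab : a < b)
    (hf : ∀ x ∈ Icc a b, HasDerivAt f (f' x) x) (hg : ∀ x ∈ Icc a b, HasDerivAt g (g' x) x)
    (hg' : ∀ x ∈ Ioo a b, g' x ≠ 0) :
    ∃ c ∈ Ioo a b, (f a - f b) / (g a - g b) = f' c / g' c := by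
  have hfc : ContinuousOn f (Icc a b) := fun x hx => (hf x hx).continuousAt.continuousWithinAt
  have hgc : ContinuousOn g (Icc a b) := fun x hx => (hg x hx).continuousAt.continuousWithinAt
  have hgab : g a - g b ≠ 0 := by
    intro h
    obtain ⟨c, hc, hc0⟩ := exists_hasDerivAt_eq_zero hab hgc (sub_eq_zero.1 h)
      (fun x hx => hg x (Ioo_subset_Icc_self hx))
    exact hg' c hc hc0
  obtain ⟨c, hc, hcfg⟩ := exists_ratio_hasDerivAt_eq_ratio_slope f f' hab hfc
    (fun x hx => hf x (Ioo_subset_Icc_self hx)) g g' hgc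
    (fun x hx => hg x (Ioo_subset_Icc_self hx))
  exact ⟨c, hc, (div_eq_div_iff hgab (hg' c hc)).2 (by linear_combination hcfg)⟩

theorem tsum_pos_of_add_swap_pos {α : Type*} [Nonempty α] {c : α × α → ℝ} (hc : Summable c)
    (h : ∀ z, 0 < c z + c z.swap) : 0 < ∑' z, c z := by
  have hsum : ∑' z, (c z + c z.swap) = 2 * ∑' z, c z := by
    rw [hc.tsum_add hc.prod_symm, ← (Equiv.prodComm α α).tsum_eq c, two_mul]
    rfl
  have z : α × α := Classical.arbitrary _
  linarith [(hc.add hc.prod_symm).tsum_pos (fun z => (h z).le) z (h z)]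

theorem summable_nat_add_div_pow {W : ℝ → ℝ} {C : ℝ} (hW : ∀ u, |W u| ≤ C) (a : ℝ) {k : ℕ}
    (hk : 1 < k) : Summable fun n : ℕ => W (n + a) / (n + a) ^ k := by
  have hsum := ((Real.summable_one_div_nat_add_rpow a k).2 (by exact_mod_cast hk)).mul_left C
  refine hsum.of_norm_bounded fun n => ?_
  rw [Real.norm_eq_abs, abs_div, abs_pow, Real.rpow_natCast, mul_one_div]
  exact div_le_div_of_nonneg_right (hW _) (by positivity)

theorem add_div_mul_pow_pos {W : ℝ → ℝ} (hW : StrictMonoOn W (Ioi 0)) (k : ℕ) {a b c d : ℝ}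
    (ha : 0 < a) (hc : 0 < c) (hab : a < b) (hcd : c < d) (h : b - a = d - c) :
    0 < (W d - W a) / (a * d) ^ k + (W b - W c) / (b * c) ^ k := by
  have hb : 0 < b := ha.trans hab
  have hd : 0 < d := hc.trans hcd
  have hWab : W a < W b := hW ha hb hab
  have hWcd : W c < W d := hW hc hd hcd
  -- `a * d - b * c = (a - c) * (b - a)`, so the two weights are ordered like `W a` and `W c`
  have hcross : 0 ≤ (1 / (a * d) ^ k - 1 / (b * c) ^ k) * (W c - W a) := by
    rcases le_total c a with hca | hac
    · have hbc : b * c ≤ a * d := by nlinarith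
      refine mul_nonneg_of_nonpos_of_nonpos (sub_nonpos.2 ?_)
        (sub_nonpos.2 (hW.monotoneOn hc ha hca))
      exact one_div_le_one_div_of_le (by positivity) (pow_le_pow_left₀ (by positivity) hbc k)
    · have had : a * d ≤ b * c := by nlinarith
      refine mul_nonneg (sub_nonneg.2 ?_) (sub_nonneg.2 (hW.monotoneOn ha hc hac))
      exact one_div_le_one_div_of_le (by positivity) (pow_le_pow_left₀ (by positivity) had k)
  calc 0 < 1 / (a * d) ^ k * (W d - W c) + 1 / (b * c) ^ k * (W b - W a)
        + (1 / (a * d) ^ k - 1 / (b * c) ^ k) * (W c - W a) := by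
        refine add_pos_of_pos_of_nonneg (add_pos ?_ ?_) hcross <;>
          exact mul_pos (by positivity) (sub_pos.2 ‹_›)
    _ = _ := by ring

theorem tsum_one_div_nat_add_pow_mul_tsum_lt {W : ℝ → ℝ} {C : ℝ} {k : ℕ}
    (hW : StrictMonoOn W (Ioi 0)) (hWC : ∀ u, |W u| ≤ C) (hk : 1 < k) {s t : ℝ} (hs : 0 < s)
    (hst : s < t) :
    (∑' n : ℕ, 1 / ((n : ℝ) + t) ^ k) * ∑' n : ℕ, W (n + s) / (n + s) ^ k
      < (∑' n : ℕ, 1 / ((n : ℝ) + s) ^ k) * ∑' n : ℕ, W (n + t) / (n + t) ^ k := by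
  have hprod {f g : ℕ → ℝ} (hf : Summable f) (hg : Summable g) :
      (∑' n, f n) * ∑' m, g m = ∑' z : ℕ × ℕ, f z.1 * g z.2 :=
    tsum_mul_tsum_of_summable_norm hf.abs hg.abs
  have hsummable {f g : ℕ → ℝ} (hf : Summable f) (hg : Summable g) :
      Summable fun z : ℕ × ℕ => f z.1 * g z.2 :=
    summable_mul_of_summable_norm hf.abs hg.abs
  have hs_sum := summable_nat_add_div_pow (W := fun _ => 1) (fun _ => (abs_one).le) s hk
  have ht_sum := summable_nat_add_div_pow (W := fun _ => 1) (fun _ => (abs_one).le) t hk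
  have hWs := summable_nat_add_div_pow hWC s hk
  have hWt := summable_nat_add_div_pow hWC t hk
  rw [← sub_pos, hprod hs_sum hWt, hprod ht_sum hWs,
    ← (hsummable hs_sum hWt).tsum_sub (hsummable ht_sum hWs)]
  refine tsum_pos_of_add_swap_pos ((hsummable hs_sum hWt).sub (hsummable ht_sum hWs)) ?_
  rintro ⟨n, m⟩
  have hpair := add_div_mul_pow_pos hW k (a := n + s) (b := n + t) (c := m + s) (d := m + t)
    (by positivity) (by positivity) (by linarith) (by linarith) (by ring)
  convert hpair using 1
  simp only [Prod.swap, mul_pow]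
  ring

/-- The weight in `-Φ'(x) = 2 ∑ phiWeight y (n + x) / (n + x)³`. -/
noncomputable def phiWeight (y u : ℝ) : ℝ := (u ^ 2 / (u ^ 2 + y ^ 2)) ^ 2

theorem phiWeight_nonneg (y u : ℝ) : 0 ≤ phiWeight y u := sq_nonneg _

theorem phiWeight_pos (y : ℝ) {u : ℝ} (hu : u ≠ 0) : 0 < phiWeight y u := by
  unfold phiWeight; positivity

theorem phiWeight_le_one (y u : ℝ) : phiWeight y u ≤ 1 :=
  pow_le_one₀ (by positivity) (div_le_one_of_le₀ (by nlinarith [sq_nonneg y]) (by positivity))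

theorem abs_phiWeight_le_one (y u : ℝ) : |phiWeight y u| ≤ 1 := by
  rw [abs_of_nonneg (phiWeight_nonneg y u)]; exact phiWeight_le_one y u

theorem phiWeight_zero_left {u : ℝ} (hu : u ≠ 0) : phiWeight 0 u = 1 := by
  simp [phiWeight, hu]

theorem strictMonoOn_phiWeight {y : ℝ} (hy : y ≠ 0) : StrictMonoOn (phiWeight y) (Ioi 0) := by
  intro u (hu : 0 < u) v _ huv
  have hsq : u ^ 2 / (u ^ 2 + y ^ 2) < v ^ 2 / (v ^ 2 + y ^ 2) := by
    rw [div_lt_div_iff₀ (by positivity) (by positivity)]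
    nlinarith [mul_lt_mul_of_pos_right (pow_lt_pow_left₀ huv hu.le two_ne_zero)
      (pow_pos (sq_pos_of_ne_zero hy) 1)]
  exact pow_lt_pow_left₀ hsq (by positivity) two_ne_zero

theorem hasDerivAt_one_div_sq_add_sq (y : ℝ) {u : ℝ} (hu : u ≠ 0) :
    HasDerivAt (fun u => 1 / (u ^ 2 + y ^ 2)) (-(2 * (phiWeight y u / u ^ 3))) u := by
  have hden : u ^ 2 + y ^ 2 ≠ 0 := by positivity
  have h := ((hasDerivAt_pow 2 u).add_const (y ^ 2)).inv hden
  simp only [one_div]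
  refine h.congr_deriv ?_
  unfold phiWeight
  field_simp
  ring

theorem summable_one_div_nat_add_sq_add_sq (y : ℝ) {x : ℝ} (hx : 0 < x) :
    Summable fun n : ℕ => 1 / (((n : ℝ) + x) ^ 2 + y ^ 2) := by
  refine (summable_nat_add_div_pow (W := fun _ => 1) (fun _ => (abs_one).le) x
    one_lt_two).of_nonneg_of_le (fun n => by positivity) fun n => ?_
  exact one_div_le_one_div_of_le (by positivity) (le_add_of_nonneg_right (sq_nonneg y))

theorem hasDerivAt_Phi (y : ℝ) {x : ℝ} (hx : 0 < x) :
    HasDerivAt (Phi y) (-(2 * ∑' n : ℕ, phiWeight y (n + x) / (n + x) ^ 3)) x := by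
  have hpos (n : ℕ) {z : ℝ} (hz : z ∈ Ioi (x / 2)) : 0 < (n : ℝ) + z := by
    have : 0 < z := (half_pos hx).trans hz
    positivity
  have h := hasDerivAt_tsum_of_isPreconnected (t := Ioi (x / 2))
    (summable_nat_add_div_pow (W := fun _ => 2) (C := 2) (fun _ => by norm_num) (x / 2)
      (by norm_num : 1 < 3))
    isOpen_Ioi isPreconnected_Ioi
    (g := fun (n : ℕ) (z : ℝ) => 1 / (((n : ℝ) + z) ^ 2 + y ^ 2))
    (g' := fun (n : ℕ) (z : ℝ) => -(2 * (phiWeight y (n + z) / (n + z) ^ 3)))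
    (fun n z hz => (hasDerivAt_one_div_sq_add_sq y (hpos n hz).ne').comp_const_add (n : ℝ) z)
    (fun n z hz => by
      have hnz := hpos n hz
      have hn : 0 < (n : ℝ) + x / 2 := by positivity
      have hW := phiWeight_nonneg y (n + z)
      rw [norm_neg, Real.norm_of_nonneg (by positivity)]
      calc 2 * (phiWeight y (n + z) / (n + z) ^ 3) ≤ 2 * (1 / (n + z) ^ 3) := by
            gcongr; exact phiWeight_le_one y _
        _ ≤ 2 * (1 / (n + x / 2) ^ 3) := by gcongr; exact hz.le
        _ = 2 / (n + x / 2) ^ 3 := by ring)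
    (half_lt_self hx) (summable_one_div_nat_add_sq_add_sq y hx) (half_lt_self hx)
  rwa [tsum_neg, tsum_mul_left] at h

theorem trigamma_eq_Phi_zero : trigamma = Phi 0 := by
  funext x; simp [trigamma, Phi]

theorem hasDerivAt_trigamma_s9 {x : ℝ} (hx : 0 < x) :
    HasDerivAt trigamma (-(2 * ∑' n : ℕ, 1 / ((n : ℝ) + x) ^ 3)) x := by
  rw [trigamma_eq_Phi_zero]
  convert hasDerivAt_Phi 0 hx using 5 with n
  rw [phiWeight_zero_left (by positivity)]

theorem tsum_phiWeight_div_pow_pos (y : ℝ) {x : ℝ} (hx : 0 < x) {k : ℕ} (hk : 1 < k) :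
    0 < ∑' n : ℕ, phiWeight y (n + x) / (n + x) ^ k := by
  refine (summable_nat_add_div_pow (abs_phiWeight_le_one y) x hk).tsum_pos
    (fun n => div_nonneg (phiWeight_nonneg y _) (by positivity)) 0 ?_
  exact div_pos (phiWeight_pos y (by positivity)) (by positivity)

/-- The ratio inequality implying that the vertical line through `θ` is steep-descent
for `Re[h]` in the Beta RWRE asymptotic analysis. -/
theorem steep_descent_ratio_inequality (α β θ y : ℝ)
    (hα : 0 < α) (hβ : 0 < β) (hθ : 0 < θ) (hy : 0 < y) :
    (trigamma (θ + α) - trigamma (θ + α + β))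
        / (Phi y (θ + α) - Phi y (θ + α + β))
      < (trigamma θ - trigamma (θ + α)) / (Phi y θ - Phi y (θ + α)) := by
  have hB (x : ℝ) (hx : 0 < x) : 0 < ∑' n : ℕ, phiWeight y (n + x) / (n + x) ^ 3 :=
    tsum_phiWeight_div_pow_pos y hx (by norm_num)
  have cauchy_mvt {a b : ℝ} (ha : 0 < a) (hab : a < b) :=
    exists_mem_Ioo_sub_div_sub_eq_div hab
      (fun x hx => hasDerivAt_trigamma_s9 (ha.trans_le hx.1))
      (fun x hx => hasDerivAt_Phi y (ha.trans_le hx.1))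
      (fun x hx => by linarith [hB x (ha.trans hx.1)])
  obtain ⟨η, hη, hη_eq⟩ := cauchy_mvt hθ (by linarith : θ < θ + α)
  obtain ⟨ξ, hξ, hξ_eq⟩ := cauchy_mvt (by linarith) (by linarith : θ + α < θ + α + β)
  have hη0 : 0 < η := hθ.trans hη.1
  rw [hη_eq, hξ_eq, neg_div_neg_eq, neg_div_neg_eq, mul_div_mul_left _ _ two_ne_zero,
    mul_div_mul_left _ _ two_ne_zero, div_lt_div_iff₀ (hB ξ (by linarith [hξ.1])) (hB η hη0)]
  exact tsum_one_div_nat_add_pow_mul_tsum_lt (strictMonoOn_phiWeight hy.ne')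
    (abs_phiWeight_le_one y) (by norm_num) hη0 (hη.2.trans hξ.1)
end

section
/- For 0 < θ₁ < θ₂ and fixed y > 0, with Ψ₂(x) = −Σ_{n≥0} 2/(n+x)³ and Φ(x) = Σ_{n≥0} 1/((n+x)²+y²), one has Ψ₂(θ₁)Φ'(θ₂) > Ψ₂(θ₂)Φ'(θ₁), i.e. Σ_n 2/(n+θ₁)³ · Σ_m 2(m+θ₂)/((m+θ₂)²+y²)² > Σ_n 2/(n+θ₂)³ · Σ_m 2(m+θ₁)/((m+θ₁)²+y²)². -/
/-!
With `G t = (t²/(t²+y²))²`, strictly increasing on `(0, ∞)`, one has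
`2(m+θ)/((m+θ)²+y²)² = 2(m+θ)⁻³ · G(m+θ)`, so the claim says that the average of `G(n+θ₂)` for the
weights `(n+θ₂)⁻³` exceeds the average of `G(n+θ₁)` for the weights `(n+θ₁)⁻³`. The ratio of these
weights, `((n+θ₁)/(n+θ₂))³`, increases with `n`; hence, after expanding both products into double
sums, the terms at `(n, m)` and `(m, n)` together already satisfy the strict inequality.
-/

open Set

lemma tsum_lt_tsum_of_add_swap_lt {α : Type*} [Nonempty α] {F H : α × α → ℝ}
    (hF : Summable F) (hH : Summable H) (h : ∀ p, F p + F p.swap < H p + H p.swap) :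
    ∑' p, F p < ∑' p, H p := by
  have tsum_add_swap {K : α × α → ℝ} (hK : Summable K) :
      ∑' p, (K p + K p.swap) = 2 * ∑' p, K p := by
    have hK' : Summable fun p : α × α => K p.swap := (Equiv.prodComm α α).summable_iff.mpr hK
    have hswap : ∑' p : α × α, K p.swap = ∑' p, K p := (Equiv.prodComm α α).tsum_eq K
    rw [hK.tsum_add hK', hswap, two_mul]
  have hlt := Summable.tsum_lt_tsum (i := Classical.arbitrary _) (fun p => (h p).le) (h _)
    (hF.add ((Equiv.prodComm α α).summable_iff.mpr hF))
    (hH.add ((Equiv.prodComm α α).summable_iff.mpr hH))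
  rw [tsum_add_swap hF, tsum_add_swap hH] at hlt
  linarith

lemma mul_add_mul_pos_of_le {p q u v : ℝ} (hq : 0 < q) (hqp : q ≤ p) (hu : 0 ≤ u)
    (huv : 0 < u + v) : 0 < p * u + q * v := by
  nlinarith [mul_nonneg (sub_nonneg.mpr hqp) hu]

theorem tsum_mul_tsum_lt_of_likelihood_ratio {ι : Type*} [LinearOrder ι] [Nonempty ι]
    {p q x X : ι → ℝ} (hp : ∀ i, 0 < p i) (hq : ∀ i, 0 < q i)
    (hpq : ∀ i j, i ≤ j → q i * p j ≤ p i * q j) (hx : Monotone x) (hx₀ : ∀ i, 0 ≤ x i)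
    (hxX : ∀ i, x i < X i) (hps : Summable p) (hqs : Summable q)
    (hpxs : Summable fun i => p i * x i) (hqXs : Summable fun i => q i * X i) :
    (∑' i, q i) * ∑' j, p j * x j < (∑' i, p i) * ∑' j, q j * X j := by
  have hpx₀ : 0 ≤ fun i => p i * x i := fun i => mul_nonneg (hp i).le (hx₀ i)
  have hqX₀ : 0 ≤ fun i => q i * X i := fun i => mul_nonneg (hq i).le ((hx₀ i).trans (hxX i).le)
  have hFs := hqs.mul_of_nonneg hpxs (fun i => (hq i).le) hpx₀
  have hHs := hps.mul_of_nonneg hqXs (fun i => (hp i).le) hqX₀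
  rw [hqs.tsum_mul_tsum hpxs hFs, hps.tsum_mul_tsum hqXs hHs]
  refine tsum_lt_tsum_of_add_swap_lt hFs hHs fun ⟨i, j⟩ => ?_
  -- the pair `(i, j), (j, i)` contributes `p i q j (X j - x i) + q i p j (X i - x j)`
  have pair (i j : ι) (hij : i ≤ j) :
      0 < p i * q j * (X j - x i) + q i * p j * (X i - x j) :=
    mul_add_mul_pos_of_le (mul_pos (hq i) (hp j)) (hpq i j hij)
      (by linarith [hx hij, hxX j]) (by linarith [hxX i, hxX j])
  dsimp only [Prod.swap_prod_mk]
  rcases le_total i j with hij | hji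
  · linarith [pair i j hij]
  · linarith [pair j i hji]

lemma div_pow_add_mul_div_pow_add_le (c : ℝ) (k : ℕ) {a b s t : ℝ} (hc : 0 ≤ c) (has : 0 < a + s)
    (hab : a ≤ b) (hst : s ≤ t) :
    c / (a + t) ^ k * (c / (b + s) ^ k) ≤ c / (a + s) ^ k * (c / (b + t) ^ k) := by
  have hbt : 0 < b + t := by linarith
  rw [div_mul_div_comm, div_mul_div_comm, ← mul_pow, ← mul_pow]
  refine div_le_div_of_nonneg_left (mul_nonneg hc hc) (by positivity) ?_
  exact pow_le_pow_left₀ (by positivity) (by nlinarith) k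

lemma strictMonoOn_sq_div_sq_add_sq_sq {y : ℝ} (hy : y ≠ 0) :
    StrictMonoOn (fun t : ℝ => (t ^ 2 / (t ^ 2 + y ^ 2)) ^ 2) (Ioi 0) := by
  intro s hs t _ hst
  have hs : 0 < s := hs
  have hy2 : 0 < y ^ 2 := by positivity
  refine pow_lt_pow_left₀ ?_ (by positivity) two_ne_zero
  rw [div_lt_div_iff₀ (by positivity) (by positivity)]
  nlinarith [mul_lt_mul_of_pos_right (pow_lt_pow_left₀ hst hs.le two_ne_zero) hy2]

lemma sq_div_sq_add_sq_sq_le_one (t y : ℝ) : (t ^ 2 / (t ^ 2 + y ^ 2)) ^ 2 ≤ 1 :=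
  pow_le_one₀ (by positivity) (div_le_one_of_le₀ (by nlinarith [sq_nonneg y]) (by positivity))

lemma mul_div_sq_add_sq_sq (c t y : ℝ) :
    c * t / (t ^ 2 + y ^ 2) ^ 2 = c / t ^ 3 * (t ^ 2 / (t ^ 2 + y ^ 2)) ^ 2 := by
  rcases eq_or_ne t 0 with rfl | ht
  · simp
  · rcases eq_or_ne (t ^ 2 + y ^ 2) 0 with h | h
    · simp [h]
    · field_simp

lemma summable_div_nat_add_pow (c : ℝ) {θ : ℝ} (hθ : 0 < θ) {k : ℕ} (hk : 1 < k) :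
    Summable fun n : ℕ => c / ((n : ℝ) + θ) ^ k := by
  have h := (Real.summable_one_div_nat_add_rpow θ k).mpr (mod_cast hk)
  refine (h.mul_left c).congr fun n => ?_
  rw [abs_of_pos (by positivity), mul_one_div]
  norm_cast

/-- For `0 < θ₁ < θ₂` and `y > 0`: `Ψ₂(θ₁)Φ'(θ₂) > Ψ₂(θ₂)Φ'(θ₁)`, in the explicit
series form
`Σ_n 2/(n+θ₁)³ · Σ_m 2(m+θ₂)/((m+θ₂)²+y²)² > Σ_n 2/(n+θ₂)³ · Σ_m 2(m+θ₁)/((m+θ₁)²+y²)²`. -/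
theorem tetragamma_phi_cross_inequality (θ₁ θ₂ y : ℝ)
    (h₁ : 0 < θ₁) (h₁₂ : θ₁ < θ₂) (hy : 0 < y) :
    (∑' n : ℕ, 2 / ((n:ℝ) + θ₂) ^ 3)
        * ∑' m : ℕ, 2 * ((m:ℝ) + θ₁) / ((((m:ℝ) + θ₁) ^ 2 + y ^ 2) ^ 2)
      < (∑' n : ℕ, 2 / ((n:ℝ) + θ₁) ^ 3)
        * ∑' m : ℕ, 2 * ((m:ℝ) + θ₂) / ((((m:ℝ) + θ₂) ^ 2 + y ^ 2) ^ 2) := by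
  have hθ₂ : 0 < θ₂ := h₁.trans h₁₂
  set G : ℝ → ℝ := fun t => (t ^ 2 / (t ^ 2 + y ^ 2)) ^ 2
  have hG : StrictMonoOn G (Ioi 0) := strictMonoOn_sq_div_sq_add_sq_sq hy.ne'
  have summable_weight {θ : ℝ} (hθ : 0 < θ) : Summable fun n : ℕ => 2 / ((n : ℝ) + θ) ^ 3 :=
    summable_div_nat_add_pow 2 hθ (by norm_num)
  have summable_weighted {θ : ℝ} (hθ : 0 < θ) :
      Summable fun n : ℕ => 2 / ((n : ℝ) + θ) ^ 3 * G (n + θ) :=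
    (summable_weight hθ).of_nonneg_of_le (fun n => by positivity)
      fun n => mul_le_of_le_one_right (by positivity) (sq_div_sq_add_sq_sq_le_one _ _)
  have weight_ratio (n m : ℕ) (hnm : n ≤ m) :
      2 / ((n : ℝ) + θ₂) ^ 3 * (2 / ((m : ℝ) + θ₁) ^ 3)
        ≤ 2 / ((n : ℝ) + θ₁) ^ 3 * (2 / ((m : ℝ) + θ₂) ^ 3) :=
    div_pow_add_mul_div_pow_add_le 2 3 zero_le_two (by positivity) (mod_cast hnm) h₁₂.le
  have G_mono : Monotone fun n : ℕ => G (n + θ₁) := fun n m hnm =>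
    hG.monotoneOn (by positivity : (0 : ℝ) < n + θ₁) (by positivity : (0 : ℝ) < m + θ₁)
      (by gcongr)
  have G_lt (n : ℕ) : G (n + θ₁) < G (n + θ₂) :=
    hG (by positivity : (0 : ℝ) < n + θ₁) (by positivity : (0 : ℝ) < n + θ₂) (by linarith)
  simp only [mul_div_sq_add_sq_sq]
  exact tsum_mul_tsum_lt_of_likelihood_ratio (fun n => by positivity) (fun n => by positivity)
    weight_ratio G_mono (fun n => by positivity) G_lt (summable_weight h₁) (summable_weight hθ₂)
    (summable_weighted h₁) (summable_weighted hθ₂)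
end

section
/- For all a, b, θ > 0 and y > 0: (1/(θ²+y²) − 1/((θ+a)²+y²))·(1/(a+θ)² − 1/(a+b+θ)²) < (1/((θ+a)²+y²) − 1/((θ+a+b)²+y²))·(1/θ² − 1/(a+θ)²). Consequently Im[H'(θ+iy)] > 0 for y > 0, i.e. the vertical line through θ is steep-descent for Re[H]. -/
/-!
With `P < Q < R` the squares of `θ < θ + a < θ + a + b` and `Y = y²`, both sides of the inequality
carry the common positive factor `(Q - P)(R - Q) / (Q (Q + Y))`; cancelling it leaves
`1 / ((P + Y) R) < 1 / ((R + Y) P)`, i.e. `Y P < Y R`. Since `Im (1 / (x + i y)) = -y / (x² + y²)`,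
`Im H'(θ + i y)` is `y` times the difference of the two sides divided by `1/(θ+a)² − 1/(θ+a+b)² > 0`.
-/

open Complex

lemma one_div_add_sub_one_div_add_mul_one_div_sub_one_div_lt {P Q R Y : ℝ}
    (hP : 0 < P) (hPQ : P < Q) (hQR : Q < R) (hY : 0 < Y) :
    (1 / (P + Y) - 1 / (Q + Y)) * (1 / Q - 1 / R)
      < (1 / (Q + Y) - 1 / (R + Y)) * (1 / P - 1 / Q) := by
  have hQ : 0 < Q := hP.trans hPQ
  have hR : 0 < R := hQ.trans hQR
  set c := (Q - P) * (R - Q) / (Q * (Q + Y)) with hc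
  have hc_pos : 0 < c := by
    have := sub_pos.2 hPQ
    have := sub_pos.2 hQR
    positivity
  have hcross : (R + Y) * P < (P + Y) * R := by
    linarith [mul_lt_mul_of_pos_left (hPQ.trans hQR) hY]
  calc (1 / (P + Y) - 1 / (Q + Y)) * (1 / Q - 1 / R)
      = c * (1 / ((P + Y) * R)) := by rw [hc]; field_simp; ring
    _ < c * (1 / ((R + Y) * P)) := by gcongr
    _ = (1 / (Q + Y) - 1 / (R + Y)) * (1 / P - 1 / Q) := by rw [hc]; field_simp; ring

lemma im_one_div_ofReal_add_mul_I (x y : ℝ) :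
    (1 / ((x : ℂ) + y * I)).im = -y / (x ^ 2 + y ^ 2) := by
  simp [Complex.inv_im, Complex.normSq_apply, sq]

lemma im_add_one_div_sub_one_div_add_mul (τ κ p q r y : ℝ) :
    ((τ : ℂ) + 1 / ((p : ℂ) + y * I) - 1 / ((q : ℂ) + y * I)
        + (κ : ℂ) * (1 / ((r : ℂ) + y * I) - 1 / ((q : ℂ) + y * I))).im
      = y * (κ * (1 / (q ^ 2 + y ^ 2) - 1 / (r ^ 2 + y ^ 2))
          - (1 / (p ^ 2 + y ^ 2) - 1 / (q ^ 2 + y ^ 2))) := by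
  simp only [add_im, sub_im, ofReal_im, im_ofReal_mul, im_one_div_ofReal_add_mul_I]
  ring

/-- Steep descent of the vertical line through `θ` for `Re[H]` in the
Bernoulli-Exponential FPP model: the key inequality, together with its consequence
`Im[H'(θ+iy)] > 0` where
`H'(z) = τ(θ) + 1/z − 1/(a+z) + κ(θ)(1/(a+b+z) − 1/(a+z))`. -/
theorem HFPP_steep_descent_vertical (a b θ y : ℝ)
    (ha : 0 < a) (hb : 0 < b) (hθ : 0 < θ) (hy : 0 < y) :
    (1 / (θ ^ 2 + y ^ 2) - 1 / ((θ + a) ^ 2 + y ^ 2))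
          * (1 / (a + θ) ^ 2 - 1 / (a + b + θ) ^ 2)
        < (1 / ((θ + a) ^ 2 + y ^ 2) - 1 / ((θ + a + b) ^ 2 + y ^ 2))
          * (1 / θ ^ 2 - 1 / (a + θ) ^ 2) ∧
    0 < (((a * (a + b) / (θ ^ 2 * (2 * a + b + 2 * θ)) : ℝ) : ℂ)
          + 1 / ((θ:ℂ) + (y:ℂ) * Complex.I)
          - 1 / ((a:ℂ) + (θ:ℂ) + (y:ℂ) * Complex.I)
          + (((1 / θ ^ 2 - 1 / (a + θ) ^ 2)
                / (1 / (a + θ) ^ 2 - 1 / (a + b + θ) ^ 2) : ℝ) : ℂ)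
            * (1 / ((a:ℂ) + (b:ℂ) + (θ:ℂ) + (y:ℂ) * Complex.I)
                - 1 / ((a:ℂ) + (θ:ℂ) + (y:ℂ) * Complex.I))).im := by
  have hq : (a : ℂ) + θ = ((θ + a : ℝ) : ℂ) := by push_cast; ring
  have hr : (a : ℂ) + b + θ = ((θ + a + b : ℝ) : ℂ) := by push_cast; ring
  rw [hq, hr, im_add_one_div_sub_one_div_add_mul, add_comm a θ,
    show a + b + θ = θ + a + b by ring]
  have hθa : θ < θ + a := lt_add_of_pos_right θ ha
  have hθab : θ + a < θ + a + b := lt_add_of_pos_right _ hb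
  have key := one_div_add_sub_one_div_add_mul_one_div_sub_one_div_lt (pow_pos hθ 2)
    (pow_lt_pow_left₀ hθa hθ.le two_ne_zero)
    (pow_lt_pow_left₀ hθab (by positivity) two_ne_zero) (pow_pos hy 2)
  have hden : 0 < 1 / (θ + a) ^ 2 - 1 / (θ + a + b) ^ 2 := by
    rw [sub_pos]; gcongr
  refine ⟨key, mul_pos hy ?_⟩
  rw [sub_pos, div_mul_eq_mul_div, lt_div_iff₀ hden]
  linarith
end

section
/- Let X and Y generate an associative algebra over ℝ subject to the single relation YX = (1/(1+ν))XX + ((ν−1)/(1+ν))XY + (1/(1+ν))YY, for a parameter ν > 0. Then for all n ≥ 0 and p = (ν−μ)/ν with 0 < μ < ν: (pX + (1−p)Y)^n = Σ_{j=0}^n C(n,j) · (ν−μ)_j (μ)_{n−j}/(ν)_n · X^j Y^{n−j}. -/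
/-!
Put `D = Y - X`. The defining relation becomes `D X = X D + ν⁻¹ D²`, a rescaled Jordan plane,
in which every word can be normally ordered as a combination of the `X ^ a * D ^ b`. Moving `D ^ k`
past `X` produces `(k / ν) D ^ (k + 1)`, so `(X + (t / ν) D) ^ m` expands with coefficients
`C(m, k) (t)_k / ν ^ k`. With `t = μ` this is the left-hand side; with `t = ν` it is `Y ^ m`,
which normally orders the right-hand side. Comparing the coefficients of `X ^ (n - i) * D ^ i`
leaves the identity `E [C(n - J, i)] = C(n, i) (μ)_i / (ν)_i` for the Beta-binomial weights of `J`,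
which follows from the Chu–Vandermonde identity for rising factorials.
-/

open Polynomial Finset

section Pochhammer

variable {S : Type*} [CommSemiring S]

theorem ascPochhammer_eval_add (a b : S) (m : ℕ) :
    (ascPochhammer S m).eval (a + b)
      = ∑ i ∈ range (m + 1),
          (m.choose i : S) * ((ascPochhammer S i).eval a * (ascPochhammer S (m - i)).eval b) := by
  induction m with
  | zero => simp
  | succ m ih =>
    rw [sum_choose_succ_mul (fun i j => (ascPochhammer S i).eval a * (ascPochhammer S j).eval b),
      ← sum_add_distrib, ascPochhammer_succ_eval, ih, sum_mul]
    refine sum_congr rfl fun i hi => ?_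
    have hi : i ≤ m := Nat.lt_succ_iff.mp (mem_range.mp hi)
    have hcast : (m : S) = i + (m - i : ℕ) := by rw [← Nat.cast_add, Nat.add_sub_cancel' hi]
    rw [Nat.sub_add_comm hi, ascPochhammer_succ_eval, ascPochhammer_succ_eval, hcast]
    ring

theorem ascPochhammer_mul_eval (x : S) (i k : ℕ) :
    (ascPochhammer S i).eval x * (ascPochhammer S k).eval (x + i)
      = (ascPochhammer S (i + k)).eval x := by
  rw [← ascPochhammer_mul, eval_mul, eval_comp]
  simp

theorem sum_choose_mul_choose_sub_mul_ascPochhammer (a b : S) {n i : ℕ} (hi : i ≤ n) :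
    ∑ j ∈ range (n + 1), (n.choose j : S) * ((n - j).choose i : S)
        * ((ascPochhammer S j).eval a * (ascPochhammer S (n - j)).eval b)
      = (n.choose i : S) * (ascPochhammer S i).eval b
          * (ascPochhammer S (n - i)).eval (a + b + i) := by
  obtain ⟨m, rfl⟩ := Nat.exists_eq_add_of_le hi
  have hvanish : ∀ j ∈ range (i + m + 1), j ∉ range (m + 1) →
      ((i + m).choose j : S) * ((i + m - j).choose i : S)
        * ((ascPochhammer S j).eval a * (ascPochhammer S (i + m - j)).eval b) = 0 := by
    intro j hj hjm
    simp only [mem_range] at hj hjm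
    simp [Nat.choose_eq_zero_of_lt (show i + m - j < i by omega)]
  rw [← sum_subset (range_subset_range.mpr (by omega)) hvanish, Nat.add_sub_cancel_left,
    add_assoc, ascPochhammer_eval_add, mul_sum]
  refine sum_congr rfl fun j hj => ?_
  have hj : j ≤ m := Nat.lt_succ_iff.mp (mem_range.mp hj)
  have hsub : i + m - j = i + (m - j) := by omega
  have hchoose : ((i + m).choose j : S) * ((i + m - j).choose i : S)
      = (i + m).choose i * m.choose j := by
    have h := Nat.choose_mul (n := i + m) (k := i + m - j) (s := i) (by omega)
    rw [Nat.choose_symm (by omega), hsub, Nat.add_sub_cancel_left, Nat.add_sub_cancel_left,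
      Nat.choose_symm hj] at h
    rw [hsub, ← Nat.cast_mul, ← Nat.cast_mul, h]
  rw [hchoose, hsub, ← ascPochhammer_mul_eval, add_comm b]
  ring

theorem sum_betaBinomial_mul_choose_sub {K : Type*} [Field K] {μ ν : K} {n i : ℕ} (hi : i ≤ n)
    (hν : (ascPochhammer K n).eval ν ≠ 0) :
    ∑ j ∈ range (n + 1),
        (n.choose j : K) * ((ascPochhammer K j).eval (ν - μ) * (ascPochhammer K (n - j)).eval μ)
          / (ascPochhammer K n).eval ν * ((n - j).choose i : K)
      = (n.choose i : K) * (ascPochhammer K i).eval μ / (ascPochhammer K i).eval ν := by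
  obtain ⟨m, rfl⟩ := Nat.exists_eq_add_of_le hi
  obtain ⟨hνi, hνm⟩ := mul_ne_zero_iff.mp ((ascPochhammer_mul_eval ν i m).symm ▸ hν)
  calc _ = (∑ j ∈ range (i + m + 1), ((i + m).choose j : K) * ((i + m - j).choose i : K)
          * ((ascPochhammer K j).eval (ν - μ) * (ascPochhammer K (i + m - j)).eval μ))
          / (ascPochhammer K (i + m)).eval ν := by
        rw [sum_div]
        exact sum_congr rfl fun j _ => by ring
    _ = _ := by
      rw [sum_choose_mul_choose_sub_mul_ascPochhammer _ _ hi, sub_add_cancel,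
        Nat.add_sub_cancel_left, ← ascPochhammer_mul_eval]
      field_simp

end Pochhammer

section JordanPlane

variable {K R : Type*} [CommRing K] [Ring R] [Algebra K R]

def JordanPlaneRelation (c : K) (X D : R) : Prop :=
  D * X = X * D + c • (D * D)

namespace JordanPlaneRelation

variable {c : K} {X D : R}

theorem pow_mul (h : JordanPlaneRelation c X D) (k : ℕ) :
    D ^ k * X = X * D ^ k + (k * c) • D ^ (k + 1) := by
  induction k with
  | zero => simp
  | succ k ih =>
    calc D ^ (k + 1) * X = D ^ k * (D * X) := by rw [pow_succ, mul_assoc]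
      _ = (D ^ k * X) * D + c • D ^ (k + 2) := by
        rw [h, mul_add, mul_smul_comm, ← mul_assoc, ← mul_assoc, ← pow_succ, ← pow_succ]
      _ = X * D ^ (k + 1) + ((k + 1 : ℕ) * c) • D ^ (k + 2) := by
        rw [ih, add_mul, smul_mul_assoc, mul_assoc, ← pow_succ, ← pow_succ, add_assoc, ← add_smul]
        push_cast
        ring_nf

theorem add_smul_pow (h : JordanPlaneRelation c X D) (t : K) (m : ℕ) :
    (X + (t * c) • D) ^ m
      = ∑ k ∈ range (m + 1),
          ((m.choose k : K) * (ascPochhammer K k).eval t * c ^ k) • (X ^ (m - k) * D ^ k) := by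
  let f : ℕ → ℕ → R := fun k l => ((ascPochhammer K k).eval t * c ^ k) • (X ^ l * D ^ k)
  suffices (X + (t * c) • D) ^ m = ∑ k ∈ range (m + 1), m.choose k • f k (m - k) by
    simp only [this, f, smul_smul, ← Nat.cast_smul_eq_nsmul K, mul_assoc]
  induction m with
  | zero => simp [f]
  | succ m ih =>
    rw [sum_choose_succ_nsmul f m, ← sum_add_distrib, pow_succ, ih, sum_mul]
    refine sum_congr rfl fun k hk => ?_
    have hk : k ≤ m := Nat.lt_succ_iff.mp (mem_range.mp hk)
    have hmove : X ^ (m - k) * D ^ k * X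
        = X ^ (m + 1 - k) * D ^ k + (k * c) • (X ^ (m - k) * D ^ (k + 1)) := by
      rw [mul_assoc, h.pow_mul, mul_add, mul_smul_comm, ← mul_assoc, ← pow_succ,
        Nat.sub_add_comm hk]
    simp only [f, smul_mul_assoc, mul_add, hmove, mul_smul_comm, mul_assoc, ← pow_succ,
      ascPochhammer_succ_eval]
    module

theorem pow_mul_add_smul_pow (h : JordanPlaneRelation c X D) (t : K) {j n : ℕ} (hj : j ≤ n) :
    X ^ j * (X + (t * c) • D) ^ (n - j)
      = ∑ k ∈ range (n + 1),
          (((n - j).choose k : K) * (ascPochhammer K k).eval t * c ^ k) • (X ^ (n - k) * D ^ k) := by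
  rw [h.add_smul_pow, mul_sum]
  refine sum_subset_zero_on_sdiff (range_subset_range.mpr (by omega)) ?_ ?_
  · intro k hk
    simp only [mem_sdiff, mem_range] at hk
    simp [Nat.choose_eq_zero_of_lt (show n - j < k by omega)]
  · intro k hk
    have hk : k < n - j + 1 := mem_range.mp hk
    rw [mul_smul_comm, ← mul_assoc, ← pow_add, show j + (n - j - k) = n - k by omega]

end JordanPlaneRelation

end JordanPlane

theorem jordanPlaneRelation_sub_of_rel {R : Type*} [Ring R] [Algebra ℝ R] {ν : ℝ} (hν : 0 < ν)
    {X Y : R} (hrel : Y * X = (1 / (1 + ν)) • (X * X) + ((ν - 1) / (1 + ν)) • (X * Y)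
      + (1 / (1 + ν)) • (Y * Y)) :
    JordanPlaneRelation ν⁻¹ X (Y - X) := by
  have hν1 : 1 + ν ≠ 0 := by positivity
  have hcleared : (1 + ν) • (Y * X) = X * X + (ν - 1) • (X * Y) + Y * Y := by
    rw [hrel, smul_add, smul_add, smul_smul, smul_smul, smul_smul, mul_one_div_cancel hν1,
      mul_div_cancel₀ _ hν1, one_smul, one_smul]
  apply (smul_right_injective R hν.ne').eq_iff.mp
  simp only [smul_add, smul_smul, mul_inv_cancel₀ hν.ne', one_smul, sub_mul, mul_sub]
  linear_combination (norm := module) hcleared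

/-- Non-commutative binomial identity (q → 1 degeneration of Povolotsky's theorem):
if `YX = 1/(1+ν)·XX + (ν−1)/(1+ν)·XY + 1/(1+ν)·YY`, then with `p = (ν−μ)/ν`,
`(pX + (1−p)Y)^n = Σ_j C(n,j) (ν−μ)_j (μ)_{n−j}/(ν)_n · X^j Y^{n−j}`. -/
theorem noncommutative_beta_binomial {R : Type*} [Ring R] [Algebra ℝ R]
    (μ ν : ℝ) (hμ : 0 < μ) (hμν : μ < ν) (X Y : R)
    (hrel : Y * X = (1 / (1 + ν)) • (X * X) + ((ν - 1) / (1 + ν)) • (X * Y)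
      + (1 / (1 + ν)) • (Y * Y)) (n : ℕ) :
    (((ν - μ) / ν) • X + (1 - (ν - μ) / ν) • Y) ^ n
      = ∑ j ∈ range (n + 1),
          ((n.choose j : ℝ)
              * ((ascPochhammer ℝ j).eval (ν - μ) * (ascPochhammer ℝ (n - j)).eval μ)
              / (ascPochhammer ℝ n).eval ν) • (X ^ j * Y ^ (n - j)) := by
  have hν : 0 < ν := hμ.trans hμν
  have hjordan := jordanPlaneRelation_sub_of_rel hν hrel
  have hZ : ((ν - μ) / ν) • X + (1 - (ν - μ) / ν) • Y = X + (μ * ν⁻¹) • (Y - X) := by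
    rw [show (ν - μ) / ν = 1 - μ * ν⁻¹ by field_simp]
    module
  have hY : X + (ν * ν⁻¹) • (Y - X) = Y := by
    rw [mul_inv_cancel₀ hν.ne', one_smul, add_sub_cancel]
  rw [hZ, hjordan.add_smul_pow]
  calc _ = ∑ i ∈ range (n + 1), (∑ j ∈ range (n + 1),
            (n.choose j : ℝ) * ((ascPochhammer ℝ j).eval (ν - μ)
              * (ascPochhammer ℝ (n - j)).eval μ) / (ascPochhammer ℝ n).eval ν
            * ((n - j).choose i : ℝ) * ((ascPochhammer ℝ i).eval ν * ν⁻¹ ^ i))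
            • (X ^ (n - i) * (Y - X) ^ i) := by
        refine sum_congr rfl fun i hi => ?_
        rw [← sum_mul, sum_betaBinomial_mul_choose_sub (Nat.lt_succ_iff.mp (mem_range.mp hi))
          (ascPochhammer_pos n ν hν).ne']
        field_simp [(ascPochhammer_pos i ν hν).ne']
    _ = _ := by
      simp only [sum_smul]
      rw [sum_comm]
      refine sum_congr rfl fun j hj => ?_
      have hexpand := hjordan.pow_mul_add_smul_pow ν (Nat.lt_succ_iff.mp (mem_range.mp hj))
      rw [hY] at hexpand
      rw [hexpand, smul_sum]
      refine sum_congr rfl fun i _ => ?_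
      rw [smul_smul]
      congr 1
      ring
end

section
/- Let X_t^{(1)}, X_t^{(2)} be two independent Beta(α,β) random walks in a common space-time i.i.d. environment, and let E denote expectation over both environment and walks. Then E[X_t^{(1)} X_t^{(2)}] = (t(α−β)/(α+β))² + (4αβ / ((α+β)²(α+β+1))) · Σ_{s=0}^{t−1} P(X_s^{(1)} = X_s^{(2)}). -/
open MeasureTheory ProbabilityTheory

/-- The Beta(a,b) probability measure on ℝ, with density
`x^{a−1}(1−x)^{b−1} Γ(a+b)/(Γ(a)Γ(b))` on `(0,1)`. -/
noncomputable def betaMeasure (a b : ℝ) : Measure ℝ :=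
  volume.withDensity fun x =>
    ENNReal.ofReal
      (if x ∈ Set.Ioo (0:ℝ) 1 then
        x ^ (a - 1) * (1 - x) ^ (b - 1) * (Real.Gamma (a + b) / (Real.Gamma a * Real.Gamma b))
      else 0)

/-!
Write `ξᵢ(s) = ±1` for the step of walker `i` at time `s`, `m = E[2B − 1]` and
`v = Var(2B − 1) = 4αβ/((α+β)²(α+β+1))`. The positions at time `s` are functions of the
driving variables (environment and coins) of times `< s`, while the steps at time `s` only
involve those of time `s`; freezing the positions therefore reduces the moments of the steps to
moments at fixed sites. Given the environment a walker steps up with probability `B`, so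
`E[ξᵢ(s)] = m`; two walkers on the same site share `B`, whence
`E[ξ₀(s) ξ₁(s)] = E[(2B − 1)²] = m² + v`, while on different sites the steps are independent
and `E[ξ₀(s) ξ₁(s)] = m²`. Expanding `X₀(s+1) X₁(s+1) = (X₀(s) + ξ₀(s)) (X₁(s) + ξ₁(s))` and
using `E[Xᵢ(s)] = s m` gives `E[X₀X₁](s+1) = E[X₀X₁](s) + (2s + 1) m² + v P(X₀(s) = X₁(s))`,
which sums to the formula.
-/

open Set

lemma betaMeasure_eq_probabilityTheory_betaMeasure (a b : ℝ) :
    _root_.betaMeasure a b = ProbabilityTheory.betaMeasure a b := by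
  unfold _root_.betaMeasure ProbabilityTheory.betaMeasure
  congr with x
  rw [betaPDF_eq, beta, one_div_div]
  simp only [mem_Ioo]
  split_ifs <;> ring_nf

namespace ProbabilityTheory

section Beta
variable {a b : ℝ}

lemma ae_mem_Ioo_betaMeasure : ∀ᵐ x ∂betaMeasure a b, x ∈ Ioo 0 1 := by
  rw [betaMeasure, ae_withDensity_iff (by unfold betaPDF; fun_prop)]
  refine .of_forall fun x hx => ⟨?_, ?_⟩ <;> by_contra! h
  · exact hx (betaPDF_eq_zero_of_nonpos h)
  · exact hx (betaPDF_eq_zero_of_one_le h)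

lemma betaPDFReal_nonneg (ha : 0 < a) (hb : 0 < b) (x : ℝ) : 0 ≤ betaPDFReal a b x := by
  by_cases hx : 0 < x ∧ x < 1
  · exact (betaPDFReal_pos hx.1 hx.2 ha hb).le
  · simp [betaPDFReal, hx]

lemma integral_betaPDFReal (ha : 0 < a) (hb : 0 < b) : ∫ x, betaPDFReal a b x = 1 := by
  rw [integral_eq_lintegral_of_nonneg_ae (.of_forall (betaPDFReal_nonneg ha hb))
    (measurable_betaPDFReal a b).aestronglyMeasurable]
  simp [← betaPDF.eq_def, lintegral_betaPDF_eq_one ha hb]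

lemma betaPDFReal_mul_pow (ha : 0 < a) (hb : 0 < b) (n : ℕ) (x : ℝ) :
    betaPDFReal a b x * x ^ n = beta (a + n) b / beta a b * betaPDFReal (a + n) b x := by
  unfold betaPDFReal
  split_ifs with hx
  · rw [show a + n - 1 = (a - 1) + n by ring, Real.rpow_add_natCast hx.1.ne']
    have := (beta_pos (by positivity : 0 < a + n) hb).ne'
    field_simp
  · simp

lemma beta_add_one_left (ha : 0 < a) (hb : 0 < b) :
    beta (a + 1) b = a / (a + b) * beta a b := by
  have := (Real.Gamma_pos_of_pos (add_pos ha hb)).ne'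
  rw [beta, beta, add_right_comm, Real.Gamma_add_one ha.ne',
    Real.Gamma_add_one (add_pos ha hb).ne']
  field_simp

lemma integral_pow_betaMeasure (ha : 0 < a) (hb : 0 < b) (n : ℕ) :
    ∫ x, x ^ n ∂betaMeasure a b = beta (a + n) b / beta a b := by
  rw [betaMeasure, integral_withDensity_eq_integral_toReal_smul (f := betaPDF a b)
    (measurable_betaPDFReal a b).ennreal_ofReal (.of_forall fun _ => ENNReal.ofReal_lt_top)]
  unfold betaPDF
  simp only [ENNReal.toReal_ofReal, betaPDFReal_nonneg ha hb, smul_eq_mul,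
    betaPDFReal_mul_pow ha hb, integral_const_mul]
  rw [integral_betaPDFReal (by positivity) hb, mul_one]

lemma integral_betaMeasure (ha : 0 < a) (hb : 0 < b) :
    ∫ x, x ∂betaMeasure a b = a / (a + b) := by
  have := (beta_pos ha hb).ne'
  simpa [beta_add_one_left ha hb, this] using integral_pow_betaMeasure ha hb 1

lemma integral_sq_betaMeasure (ha : 0 < a) (hb : 0 < b) :
    ∫ x, x ^ 2 ∂betaMeasure a b = a * (a + 1) / ((a + b) * (a + b + 1)) := by
  have := (beta_pos ha hb).ne'
  rw [integral_pow_betaMeasure ha hb 2, Nat.cast_ofNat, show a + 2 = a + 1 + 1 by ring,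
    beta_add_one_left (by positivity) hb, beta_add_one_left ha hb, add_right_comm a 1 b]
  field_simp

lemma integrable_pow_betaMeasure (ha : 0 < a) (hb : 0 < b) (n : ℕ) :
    Integrable (fun x => x ^ n) (betaMeasure a b) := by
  have := isProbabilityMeasureBeta ha hb
  refine .of_bound (by fun_prop) 1 ?_
  filter_upwards [ae_mem_Ioo_betaMeasure] with x hx
  rw [norm_pow, Real.norm_of_nonneg hx.1.le]
  exact pow_le_one₀ hx.1.le hx.2.le

lemma integral_two_mul_sub_one_betaMeasure (ha : 0 < a) (hb : 0 < b) :
    ∫ x, (2 * x - 1) ∂betaMeasure a b = (a - b) / (a + b) := by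
  have := isProbabilityMeasureBeta ha hb
  have h₁ := integrable_pow_betaMeasure ha hb 1
  simp only [pow_one] at h₁
  rw [integral_sub (h₁.const_mul 2) (integrable_const 1), integral_const_mul,
    integral_betaMeasure ha hb]
  simp only [integral_const, probReal_univ, one_smul]
  field_simp
  ring

lemma integral_two_mul_sub_one_sq_betaMeasure (ha : 0 < a) (hb : 0 < b) :
    ∫ x, (2 * x - 1) ^ 2 ∂betaMeasure a b
      = ((a - b) / (a + b)) ^ 2 + 4 * a * b / ((a + b) ^ 2 * (a + b + 1)) := by
  have := isProbabilityMeasureBeta ha hb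
  have h₁ := integrable_pow_betaMeasure ha hb 1
  have h₂ := integrable_pow_betaMeasure ha hb 2
  simp only [pow_one] at h₁
  simp_rw [show ∀ x : ℝ, (2 * x - 1) ^ 2 = 4 * x ^ 2 - 4 * x + 1 from fun x => by ring]
  rw [integral_add (f := fun x => 4 * x ^ 2 - 4 * x) ((h₂.const_mul 4).sub (h₁.const_mul 4))
      (integrable_const 1),
    integral_sub (h₂.const_mul 4) (h₁.const_mul 4), integral_const_mul, integral_const_mul,
    integral_sq_betaMeasure ha hb, integral_betaMeasure ha hb]
  simp only [integral_const, probReal_univ, one_smul]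
  field_simp
  ring

end Beta

lemma IndepFun.integral_comp_eq_integral_integral {Ω β γ : Type*} {mΩ : MeasurableSpace Ω}
    {μ : Measure Ω} [IsFiniteMeasure μ] [MeasurableSpace β] [MeasurableSpace γ] {X : Ω → β}
    {Y : Ω → γ} (hX : Measurable X) (hY : Measurable Y) (h : IndepFun X Y μ) {φ : β × γ → ℝ}
    (hφ : Integrable φ ((μ.map X).prod (μ.map Y))) :
    ∫ ω, φ (X ω, Y ω) ∂μ = ∫ x, ∫ y, φ (x, y) ∂μ.map Y ∂μ.map X := by
  have hmap := (indepFun_iff_map_prod_eq_prod_map_map hX.aemeasurable hY.aemeasurable).mp h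
  rw [← integral_prod _ hφ, ← hmap,
    integral_map (hX.prodMk hY).aemeasurable (hmap ▸ hφ.aestronglyMeasurable)]

end ProbabilityTheory

/-- The step of a walker whose uniform coin shows `u` at a site where the environment sends it
up with probability `b`. -/
noncomputable def coinStep (u b : ℝ) : ℝ := if u < b then 1 else -1

lemma abs_coinStep_le (u b : ℝ) : |coinStep u b| ≤ 1 := by
  unfold coinStep; split_ifs <;> simp

lemma abs_add_coinStep_le (a u b : ℝ) : |a + coinStep u b| ≤ |a| + 1 :=
  (abs_add_le _ _).trans (add_le_add_right (abs_coinStep_le u b) _)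

lemma coinStep_eq_indicator (u b : ℝ) : coinStep u b = 2 * (Iio b).indicator 1 u - 1 := by
  unfold coinStep; split_ifs with h <;> norm_num [h]

@[fun_prop]
lemma Measurable.coinStep {Ω : Type*} {m : MeasurableSpace Ω} {f g : Ω → ℝ} (hf : Measurable f)
    (hg : Measurable g) : Measurable fun ω => coinStep (f ω) (g ω) :=
  Measurable.ite (measurableSet_lt hf hg) measurable_const measurable_const

lemma integral_coinStep_uniform {b : ℝ} (hb : b ∈ Icc 0 1) :
    ∫ u, coinStep u b ∂volume.restrict (Ioo 0 1) = 2 * b - 1 := by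
  have : IsProbabilityMeasure (volume.restrict (Ioo (0 : ℝ) 1)) := ⟨by simp⟩
  simp_rw [coinStep_eq_indicator]
  rw [integral_sub (((integrable_const 1).indicator measurableSet_Iio).const_mul 2)
    (integrable_const 1), integral_const_mul, integral_indicator_one measurableSet_Iio,
    measureReal_restrict_apply measurableSet_Iio, Iio_inter_Ioo, min_eq_left hb.2,
    Real.volume_real_Ioo_of_le hb.1]
  simp

section CoinStep
variable {Ω : Type*} {mΩ : MeasurableSpace Ω} {μ : Measure Ω} [IsFiniteMeasure μ]

lemma integrable_coinStep {f g : Ω → ℝ} (hf : Measurable f) (hg : Measurable g) :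
    Integrable (fun ω => coinStep (f ω) (g ω)) μ :=
  .of_bound (hf.coinStep hg).aestronglyMeasurable 1 (.of_forall fun _ => abs_coinStep_le _ _)

lemma integrable_add_coinStep_mul_add_coinStep {f₀ g₀ f₁ g₁ : Ω → ℝ} (hf₀ : Measurable f₀)
    (hg₀ : Measurable g₀) (hf₁ : Measurable f₁) (hg₁ : Measurable g₁) (a b : ℝ) :
    Integrable (fun ω => (a + coinStep (f₀ ω) (g₀ ω)) * (b + coinStep (f₁ ω) (g₁ ω))) μ :=
  .of_bound (by fun_prop) ((|a| + 1) * (|b| + 1)) (.of_forall fun _ => by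
    rw [norm_mul]
    exact mul_le_mul (abs_add_coinStep_le _ _ _) (abs_add_coinStep_le _ _ _) (norm_nonneg _)
      (by positivity))

lemma integral_coinStep_of_indepFun {P V : Ω → ℝ} (hP : Measurable P) (hV : Measurable V)
    (hind : IndepFun P V μ) (hVlaw : μ.map V = volume.restrict (Ioo 0 1))
    (hPsupp : ∀ᵐ p ∂μ.map P, p ∈ Icc 0 1) :
    ∫ ω, coinStep (V ω) (P ω) ∂μ = ∫ p, (2 * p - 1) ∂μ.map P := by
  rw [hind.integral_comp_eq_integral_integral (φ := fun q => coinStep q.2 q.1) hP hV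
    (.of_bound (measurable_snd.coinStep measurable_fst).aestronglyMeasurable 1
      (.of_forall fun q => abs_coinStep_le _ _))]
  refine integral_congr_ae ?_
  filter_upwards [hPsupp] with p hp
  rw [hVlaw, integral_coinStep_uniform hp]

lemma integral_coinStep_mul_coinStep_of_indepFun {P V₀ V₁ : Ω → ℝ} (hP : Measurable P)
    (hV₀ : Measurable V₀) (hV₁ : Measurable V₁) (hind : IndepFun P (fun ω => (V₀ ω, V₁ ω)) μ)
    (hV : IndepFun V₀ V₁ μ) (hV₀law : μ.map V₀ = volume.restrict (Ioo 0 1))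
    (hV₁law : μ.map V₁ = volume.restrict (Ioo 0 1)) (hPsupp : ∀ᵐ p ∂μ.map P, p ∈ Icc 0 1) :
    ∫ ω, coinStep (V₀ ω) (P ω) * coinStep (V₁ ω) (P ω) ∂μ = ∫ p, (2 * p - 1) ^ 2 ∂μ.map P := by
  have hφ : Integrable (fun q : ℝ × ℝ × ℝ => coinStep q.2.1 q.1 * coinStep q.2.2 q.1)
      ((μ.map P).prod (μ.map fun ω => (V₀ ω, V₁ ω))) :=
    ((integrable_coinStep measurable_snd.fst measurable_fst).bdd_mul
      (measurable_snd.snd.coinStep measurable_fst).aestronglyMeasurable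
      (.of_forall fun _ => abs_coinStep_le _ _)).congr (.of_forall fun _ => mul_comm _ _)
  rw [hind.integral_comp_eq_integral_integral hP (hV₀.prodMk hV₁) hφ]
  refine integral_congr_ae ?_
  filter_upwards [hPsupp] with p hp
  rw [(indepFun_iff_map_prod_eq_prod_map_map hV₀.aemeasurable hV₁.aemeasurable).mp hV, hV₀law,
    hV₁law, integral_prod_mul (fun u => coinStep u p) (fun u => coinStep u p),
    integral_coinStep_uniform hp, sq]

end CoinStep

section Freezing
variable {Ω κ β : Type*} {m₁ m₂ m : MeasurableSpace Ω} {μ : Measure Ω}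

lemma apply_eq_sum_indicator [AddCommMonoid β] {V : Ω → κ} {s : Finset κ} (hVs : ∀ ω, V ω ∈ s)
    (F : κ → Ω → β) (ω : Ω) : F (V ω) ω = ∑ k ∈ s, (V ⁻¹' {k}).indicator (F k) ω := by
  rw [Finset.sum_eq_single_of_mem (V ω) (hVs ω) fun k _ hk =>
    indicator_of_notMem (s := V ⁻¹' {k}) (a := ω) hk.symm (F k)]
  exact (indicator_of_mem (s := V ⁻¹' {V ω}) rfl (F (V ω))).symm

lemma integral_ite_eq_mul_measureReal [MeasurableSpace κ] [DecidableEq κ] [MeasurableEq κ]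
    {f g : Ω → κ} (hf : Measurable f) (hg : Measurable g) (c : ℝ) :
    ∫ ω, (if f ω = g ω then c else 0) ∂μ = c * μ.real {ω | f ω = g ω} := by
  simpa [indicator_apply, mul_comm] using integral_indicator_const (μ := μ) c
    (measurableSet_eq_fun hf hg)

variable [MeasurableSpace κ] [MeasurableSingletonClass κ]

lemma integrable_comp_of_forall_mem_finset [IsFiniteMeasure μ] {V : Ω → κ} (hV : Measurable V)
    {s : Finset κ} (hVs : ∀ ω, V ω ∈ s) (g : κ → ℝ) : Integrable (fun ω => g (V ω)) μ := by
  simp_rw [apply_eq_sum_indicator hVs fun k _ => g k]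
  exact integrable_finsetSum _ fun k _ =>
    (integrable_const (g k)).indicator (hV (measurableSet_singleton k))

lemma setIntegral_eq_measureReal_mul_integral_of_indep [IsFiniteMeasure μ] (h₁ : m₁ ≤ m)
    (h₂ : m₂ ≤ m) (hind : Indep m₁ m₂ μ) {A : Set Ω} (hA : MeasurableSet[m₁] A) {f : Ω → ℝ}
    (hf : StronglyMeasurable[m₂] f) (hfi : Integrable f μ) :
    ∫ ω in A, f ω ∂μ = μ.real A * ∫ ω, f ω ∂μ := by
  rw [← setIntegral_condExp h₁ hfi hA, setIntegral_congr_ae (h₁ _ hA)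
    ((condExp_indep_eq h₂ h₁ hf hind.symm).mono fun _ h _ => h), setIntegral_const, smul_eq_mul]

lemma integral_apply_eq_sum_of_indep [IsFiniteMeasure μ] (h₁ : m₁ ≤ m) (h₂ : m₂ ≤ m)
    (hind : Indep m₁ m₂ μ) {V : Ω → κ} (hV : Measurable[m₁] V) {s : Finset κ}
    (hVs : ∀ ω, V ω ∈ s) {F : κ → Ω → ℝ} (hF : ∀ k, StronglyMeasurable[m₂] (F k))
    (hFi : ∀ k, Integrable (F k) μ) :
    ∫ ω, F (V ω) ω ∂μ = ∑ k ∈ s, μ.real (V ⁻¹' {k}) * ∫ ω, F k ω ∂μ := by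
  have hVk (k : κ) : MeasurableSet[m₁] (V ⁻¹' {k}) := hV (measurableSet_singleton k)
  simp_rw [apply_eq_sum_indicator hVs F]
  rw [integral_finsetSum _ fun k _ => (hFi k).indicator (h₁ _ (hVk k))]
  refine Finset.sum_congr rfl fun k _ => ?_
  rw [integral_indicator (h₁ _ (hVk k)),
    setIntegral_eq_measureReal_mul_integral_of_indep h₁ h₂ hind (hVk k) (hF k) (hFi k)]

lemma integral_apply_eq_integral_integral_of_indep [IsProbabilityMeasure μ] (h₁ : m₁ ≤ m)
    (h₂ : m₂ ≤ m) (hind : Indep m₁ m₂ μ) {V : Ω → κ} (hV : Measurable[m₁] V) {s : Finset κ}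
    (hVs : ∀ ω, V ω ∈ s) {F : κ → Ω → ℝ} (hF : ∀ k, StronglyMeasurable[m₂] (F k))
    (hFi : ∀ k, Integrable (F k) μ) :
    ∫ ω, F (V ω) ω ∂μ = ∫ ω, (∫ ω', F (V ω) ω' ∂μ) ∂μ := by
  rw [integral_apply_eq_sum_of_indep h₁ h₂ hind hV hVs hF hFi,
    integral_apply_eq_sum_of_indep (F := fun k _ => ∫ ω', F k ω' ∂μ) h₁ h₂ hind hV hVs
      (fun _ => stronglyMeasurable_const) (fun _ => integrable_const _)]
  simp

end Freezing

section GeneratedSigma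
variable {Ω ι : Type*} {mΩ : MeasurableSpace Ω}

noncomputable abbrev generatedSigma (Z : ι → Ω → ℝ) (S : Set ι) : MeasurableSpace Ω :=
  ⨆ j ∈ S, MeasurableSpace.comap (Z j) inferInstance

lemma measurable_generatedSigma {Z : ι → Ω → ℝ} {S : Set ι} {j : ι} (hj : j ∈ S) :
    Measurable[generatedSigma Z S] (Z j) :=
  measurable_iff_comap_le.mpr (le_biSup (fun j => MeasurableSpace.comap (Z j) inferInstance) hj)

lemma generatedSigma_le {Z : ι → Ω → ℝ} (hZ : ∀ j, Measurable (Z j)) (S : Set ι) :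
    generatedSigma Z S ≤ mΩ :=
  iSup₂_le fun j _ => (hZ j).comap_le

lemma indep_generatedSigma_compl {μ : Measure Ω} {Z : ι → Ω → ℝ} (hZ : ∀ j, Measurable (Z j))
    (hind : iIndepFun Z μ) (S : Set ι) :
    Indep (generatedSigma Z S) (generatedSigma Z Sᶜ) μ :=
  indep_biSup_compl (fun j => (hZ j).comap_le) hind.iIndep S

end GeneratedSigma

lemma measurable_apply_of_countable {Ω κ β : Type*} {m : MeasurableSpace Ω} [MeasurableSpace κ]
    [Countable κ] [MeasurableSingletonClass κ] [MeasurableSpace β] {V : Ω → κ} (hV : Measurable V)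
    {F : κ → Ω → β} (hF : ∀ k, Measurable (F k)) : Measurable fun ω => F (V ω) ω :=
  (measurable_from_prod_countable_right (f := fun p : κ × Ω => F p.1 p.2) hF).comp
    (hV.prodMk measurable_id)

section RandomWalk
variable {Ω : Type*} {mΩ : MeasurableSpace Ω}

/-- `inl (s, x)` indexes the environment variable `B s x`, `inr (i, s)` the coin `U i s` of
walker `i`. -/
abbrev DriveIndex := (ℕ × ℤ) ⊕ (Fin 2 × ℕ)

def DriveIndex.time : DriveIndex → ℕ := Sum.elim Prod.fst Prod.snd

noncomputable def drive (B : ℕ → ℤ → Ω → ℝ) (U : Fin 2 → ℕ → Ω → ℝ) : DriveIndex → Ω → ℝ :=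
  Sum.elim (fun p => B p.1 p.2) (fun p => U p.1 p.2)

noncomputable abbrev pastSigma (B : ℕ → ℤ → Ω → ℝ) (U : Fin 2 → ℕ → Ω → ℝ) (T : ℕ) :
    MeasurableSpace Ω :=
  generatedSigma (drive B U) {j | j.time < T}

noncomputable abbrev futureSigma (B : ℕ → ℤ → Ω → ℝ) (U : Fin 2 → ℕ → Ω → ℝ) (T : ℕ) :
    MeasurableSpace Ω :=
  generatedSigma (drive B U) {j | j.time < T}ᶜ

structure IsBetaEnvironment (Pr : Measure Ω) (α β : ℝ) (B : ℕ → ℤ → Ω → ℝ)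
    (U : Fin 2 → ℕ → Ω → ℝ) : Prop where
  measurable_env : ∀ s x, Measurable (B s x)
  measurable_coin : ∀ i s, Measurable (U i s)
  iIndepFun_drive : iIndepFun (drive B U) Pr
  map_env : ∀ s x, Pr.map (B s x) = _root_.betaMeasure α β
  map_coin : ∀ i s, Pr.map (U i s) = volume.restrict (Ioo 0 1)

structure IsCoinWalk (B : ℕ → ℤ → Ω → ℝ) (U : Fin 2 → ℕ → Ω → ℝ) (X : Fin 2 → ℕ → Ω → ℤ) :
    Prop where
  zero : ∀ i ω, X i 0 ω = 0
  succ : ∀ i s ω, X i (s + 1) ω = X i s ω + (if U i s ω < B s (X i s ω) ω then 1 else -1)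

variable {B : ℕ → ℤ → Ω → ℝ} {U : Fin 2 → ℕ → Ω → ℝ}

lemma measurable_env_pastSigma {s T : ℕ} (hs : s < T) (x : ℤ) :
    Measurable[pastSigma B U T] (B s x) :=
  measurable_generatedSigma (Z := drive B U) (j := .inl (s, x)) hs

lemma measurable_coin_pastSigma {s T : ℕ} (hs : s < T) (i : Fin 2) :
    Measurable[pastSigma B U T] (U i s) :=
  measurable_generatedSigma (Z := drive B U) (j := .inr (i, s)) hs

lemma measurable_env_futureSigma (T : ℕ) (x : ℤ) : Measurable[futureSigma B U T] (B T x) :=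
  measurable_generatedSigma (Z := drive B U) (j := .inl (T, x)) (lt_irrefl T)

lemma measurable_coin_futureSigma (T : ℕ) (i : Fin 2) :
    Measurable[futureSigma B U T] (U i T) :=
  measurable_generatedSigma (Z := drive B U) (j := .inr (i, T)) (lt_irrefl T)

namespace IsCoinWalk
variable {X : Fin 2 → ℕ → Ω → ℤ}

lemma mem_Icc (hX : IsCoinWalk B U X) (i : Fin 2) (s : ℕ) (ω : Ω) :
    X i s ω ∈ Finset.Icc (-(s : ℤ)) s := by
  induction s with
  | zero => simp [hX.zero]
  | succ s ih =>
    rw [Finset.mem_Icc] at ih ⊢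
    rw [hX.succ]
    split_ifs <;> omega

lemma measurable_pastSigma (hX : IsCoinWalk B U X) (i : Fin 2) {s T : ℕ} (hs : s ≤ T) :
    Measurable[pastSigma B U T] (X i s) := by
  induction s with
  | zero => rw [show X i 0 = fun _ => 0 from funext (hX.zero i)]; exact measurable_const
  | succ s ih =>
    have hs' : s < T := hs
    rw [show X i (s + 1) = _ from funext (hX.succ i s)]
    refine (ih hs'.le).add (measurable_apply_of_countable (ih hs'.le)
      (F := fun x ω => if U i s ω < B s x ω then (1 : ℤ) else -1) fun x => ?_)
    exact Measurable.ite (measurableSet_lt (measurable_coin_pastSigma hs' i)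
      (measurable_env_pastSigma hs' x)) measurable_const measurable_const

lemma cast_succ (hX : IsCoinWalk B U X) (i : Fin 2) (s : ℕ) (ω : Ω) :
    (X i (s + 1) ω : ℝ) = X i s ω + coinStep (U i s ω) (B s (X i s ω) ω) := by
  rw [hX.succ, coinStep]
  split_ifs <;> push_cast <;> ring

end IsCoinWalk

namespace IsBetaEnvironment
variable {Pr : Measure Ω} {α β : ℝ} {X : Fin 2 → ℕ → Ω → ℤ}

lemma measurable_drive (hE : IsBetaEnvironment Pr α β B U) : ∀ j, Measurable (drive B U j)
  | .inl p => hE.measurable_env p.1 p.2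
  | .inr p => hE.measurable_coin p.1 p.2

lemma pastSigma_le (hE : IsBetaEnvironment Pr α β B U) (T : ℕ) : pastSigma B U T ≤ mΩ :=
  generatedSigma_le hE.measurable_drive _

lemma futureSigma_le (hE : IsBetaEnvironment Pr α β B U) (T : ℕ) : futureSigma B U T ≤ mΩ :=
  generatedSigma_le hE.measurable_drive _

lemma indep_pastSigma_futureSigma (hE : IsBetaEnvironment Pr α β B U) (T : ℕ) :
    Indep (pastSigma B U T) (futureSigma B U T) Pr :=
  indep_generatedSigma_compl hE.measurable_drive hE.iIndepFun_drive _

lemma measurable_walk (hE : IsBetaEnvironment Pr α β B U) (hX : IsCoinWalk B U X) (i : Fin 2)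
    (s : ℕ) : Measurable (X i s) :=
  (hX.measurable_pastSigma i le_rfl).mono (hE.pastSigma_le s) le_rfl

lemma ae_env_mem_Icc (hE : IsBetaEnvironment Pr α β B U) (s : ℕ) (x : ℤ) :
    ∀ᵐ p ∂Pr.map (B s x), p ∈ Icc 0 1 := by
  rw [hE.map_env, betaMeasure_eq_probabilityTheory_betaMeasure]
  exact ae_mem_Ioo_betaMeasure.mono fun _ h => Ioo_subset_Icc_self h

variable [IsProbabilityMeasure Pr]

lemma integral_coinStep (hα : 0 < α) (hβ : 0 < β) (hE : IsBetaEnvironment Pr α β B U)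
    (i : Fin 2) (s : ℕ) (x : ℤ) :
    ∫ ω, coinStep (U i s ω) (B s x ω) ∂Pr = (α - β) / (α + β) := by
  rw [integral_coinStep_of_indepFun (hE.measurable_env s x) (hE.measurable_coin i s)
    (hE.iIndepFun_drive.indepFun (i := .inl (s, x)) (j := .inr (i, s)) (by simp))
    (hE.map_coin i s) (hE.ae_env_mem_Icc s x), hE.map_env,
    betaMeasure_eq_probabilityTheory_betaMeasure, integral_two_mul_sub_one_betaMeasure hα hβ]

lemma integral_coinStep_mul_coinStep (hα : 0 < α) (hβ : 0 < β)
    (hE : IsBetaEnvironment Pr α β B U) (s : ℕ) (x y : ℤ) :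
    ∫ ω, coinStep (U 0 s ω) (B s x ω) * coinStep (U 1 s ω) (B s y ω) ∂Pr
      = ((α - β) / (α + β)) ^ 2
        + if x = y then 4 * α * β / ((α + β) ^ 2 * (α + β + 1)) else 0 := by
  split_ifs with hxy
  · subst hxy
    rw [integral_coinStep_mul_coinStep_of_indepFun (hE.measurable_env s x)
      (hE.measurable_coin 0 s) (hE.measurable_coin 1 s)
      (hE.iIndepFun_drive.indepFun_prodMk hE.measurable_drive (.inr (0, s)) (.inr (1, s))
        (.inl (s, x)) (by simp) (by simp)).symm
      (hE.iIndepFun_drive.indepFun (i := .inr (0, s)) (j := .inr (1, s)) (by simp))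
      (hE.map_coin 0 s) (hE.map_coin 1 s) (hE.ae_env_mem_Icc s x), hE.map_env,
      betaMeasure_eq_probabilityTheory_betaMeasure,
      integral_two_mul_sub_one_sq_betaMeasure hα hβ]
  · have hφ : Measurable fun q : ℝ × ℝ => coinStep q.2 q.1 :=
      measurable_snd.coinStep measurable_fst
    have hind := (hE.iIndepFun_drive.indepFun_prodMk_prodMk hE.measurable_drive
      (.inl (s, x)) (.inr (0, s)) (.inl (s, y)) (.inr (1, s))
      (by simpa using hxy) (by simp) (by simp) (by simp)).comp hφ hφ
    calc _ = (∫ ω, coinStep (U 0 s ω) (B s x ω) ∂Pr) * ∫ ω, coinStep (U 1 s ω) (B s y ω) ∂Pr :=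
          hind.integral_fun_mul_eq_mul_integral
            ((hE.measurable_coin 0 s).coinStep (hE.measurable_env s x)).aestronglyMeasurable
            ((hE.measurable_coin 1 s).coinStep (hE.measurable_env s y)).aestronglyMeasurable
      _ = _ := by rw [hE.integral_coinStep hα hβ, hE.integral_coinStep hα hβ, add_zero, sq]

lemma integral_add_coinStep_mul_add_coinStep (hα : 0 < α) (hβ : 0 < β)
    (hE : IsBetaEnvironment Pr α β B U) (s : ℕ) (x y : ℤ) :
    ∫ ω, ((x : ℝ) + coinStep (U 0 s ω) (B s x ω)) * (y + coinStep (U 1 s ω) (B s y ω)) ∂Pr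
      = x * y + (α - β) / (α + β) * (x + y) + ((α - β) / (α + β)) ^ 2
        + if x = y then 4 * α * β / ((α + β) ^ 2 * (α + β + 1)) else 0 := by
  have h₀ := integrable_coinStep (μ := Pr) (hE.measurable_coin 0 s) (hE.measurable_env s x)
  have h₁ := integrable_coinStep (μ := Pr) (hE.measurable_coin 1 s) (hE.measurable_env s y)
  have h₀₁ := h₁.bdd_mul h₀.aestronglyMeasurable (.of_forall fun _ => abs_coinStep_le _ _)
  conv_lhs => simp only [add_mul, mul_add]
  rw [integral_add (by fun_prop) (by fun_prop), integral_add (by fun_prop) (by fun_prop),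
    integral_add (by fun_prop) (by fun_prop), integral_const, probReal_univ, one_smul,
    integral_mul_const, integral_const_mul, hE.integral_coinStep hα hβ,
    hE.integral_coinStep hα hβ, hE.integral_coinStep_mul_coinStep hα hβ]
  ring

lemma integral_walk_succ (hα : 0 < α) (hβ : 0 < β) (hE : IsBetaEnvironment Pr α β B U)
    (hX : IsCoinWalk B U X) (i : Fin 2) (T : ℕ) :
    ∫ ω, (X i (T + 1) ω : ℝ) ∂Pr = ∫ ω, (X i T ω : ℝ) ∂Pr + (α - β) / (α + β) := by
  have hξ (x : ℤ) : Measurable[futureSigma B U T] fun ω => coinStep (U i T ω) (B T x ω) :=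
    (measurable_coin_futureSigma T i).coinStep (measurable_env_futureSigma T x)
  have hξi (x : ℤ) : Integrable (fun ω => coinStep (U i T ω) (B T x ω)) Pr :=
    integrable_coinStep (hE.measurable_coin i T) (hE.measurable_env T x)
  have hXi : Integrable (fun ω => (X i T ω : ℝ)) Pr :=
    integrable_comp_of_forall_mem_finset (hE.measurable_walk hX i T) (hX.mem_Icc i T) _
  simp_rw [hX.cast_succ]
  rw [integral_apply_eq_integral_integral_of_indep
    (F := fun x ω => (x : ℝ) + coinStep (U i T ω) (B T x ω))
    (hE.pastSigma_le T) (hE.futureSigma_le T) (hE.indep_pastSigma_futureSigma T)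
    (hX.measurable_pastSigma i le_rfl) (hX.mem_Icc i T)
    (fun x => (measurable_const.add (hξ x)).stronglyMeasurable)
    (fun x => (integrable_const _).add (hξi x))]
  simp_rw [integral_add (integrable_const _) (hξi _), hE.integral_coinStep hα hβ, integral_const,
    probReal_univ, one_smul]
  rw [integral_add hXi (integrable_const _), integral_const, probReal_univ, one_smul]

lemma integral_walk (hα : 0 < α) (hβ : 0 < β) (hE : IsBetaEnvironment Pr α β B U)
    (hX : IsCoinWalk B U X) (i : Fin 2) (T : ℕ) :
    ∫ ω, (X i T ω : ℝ) ∂Pr = T * ((α - β) / (α + β)) := by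
  induction T with
  | zero => simp [hX.zero]
  | succ T ih =>
    rw [hE.integral_walk_succ hα hβ hX, ih]
    push_cast
    ring

lemma integral_walk_mul_walk_succ_eq (hα : 0 < α) (hβ : 0 < β)
    (hE : IsBetaEnvironment Pr α β B U) (hX : IsCoinWalk B U X) (T : ℕ) :
    ∫ ω, (X 0 (T + 1) ω : ℝ) * X 1 (T + 1) ω ∂Pr
      = ∫ ω, ((X 0 T ω : ℝ) * X 1 T ω + (α - β) / (α + β) * (X 0 T ω + X 1 T ω)
          + ((α - β) / (α + β)) ^ 2
          + if X 0 T ω = X 1 T ω then 4 * α * β / ((α + β) ^ 2 * (α + β + 1)) else 0) ∂Pr := by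
  have hF (k : ℤ × ℤ) : Measurable[futureSigma B U T] fun ω =>
      ((k.1 : ℝ) + coinStep (U 0 T ω) (B T k.1 ω)) * (k.2 + coinStep (U 1 T ω) (B T k.2 ω)) :=
    (measurable_const.add ((measurable_coin_futureSigma T 0).coinStep
      (measurable_env_futureSigma T k.1))).mul
    (measurable_const.add ((measurable_coin_futureSigma T 1).coinStep
      (measurable_env_futureSigma T k.2)))
  simp_rw [hX.cast_succ]
  rw [integral_apply_eq_integral_integral_of_indep
    (F := fun k ω =>
      ((k.1 : ℝ) + coinStep (U 0 T ω) (B T k.1 ω)) * (k.2 + coinStep (U 1 T ω) (B T k.2 ω)))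
    (hE.pastSigma_le T) (hE.futureSigma_le T) (hE.indep_pastSigma_futureSigma T)
    ((hX.measurable_pastSigma 0 le_rfl).prodMk (hX.measurable_pastSigma 1 le_rfl))
    (fun ω => Finset.mem_product.mpr ⟨hX.mem_Icc 0 T ω, hX.mem_Icc 1 T ω⟩)
    (fun k => (hF k).stronglyMeasurable)
    (fun k => integrable_add_coinStep_mul_add_coinStep (hE.measurable_coin 0 T)
      (hE.measurable_env T k.1) (hE.measurable_coin 1 T) (hE.measurable_env T k.2) _ _)]
  simp_rw [hE.integral_add_coinStep_mul_add_coinStep hα hβ]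

lemma integral_walk_mul_walk_succ (hα : 0 < α) (hβ : 0 < β)
    (hE : IsBetaEnvironment Pr α β B U) (hX : IsCoinWalk B U X) (T : ℕ) :
    ∫ ω, (X 0 (T + 1) ω : ℝ) * X 1 (T + 1) ω ∂Pr
      = ∫ ω, (X 0 T ω : ℝ) * X 1 T ω ∂Pr
        + (α - β) / (α + β) * (∫ ω, (X 0 T ω : ℝ) ∂Pr + ∫ ω, (X 1 T ω : ℝ) ∂Pr)
        + ((α - β) / (α + β)) ^ 2
        + 4 * α * β / ((α + β) ^ 2 * (α + β + 1)) * Pr.real {ω | X 0 T ω = X 1 T ω} := by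
  have hV := (hE.measurable_walk hX 0 T).prodMk (hE.measurable_walk hX 1 T)
  have hVs (ω : Ω) : (X 0 T ω, X 1 T ω) ∈ Finset.Icc (-(T : ℤ)) T ×ˢ Finset.Icc (-(T : ℤ)) T :=
    Finset.mem_product.mpr ⟨hX.mem_Icc 0 T ω, hX.mem_Icc 1 T ω⟩
  have h₀ : Integrable (fun ω => (X 0 T ω : ℝ)) Pr :=
    integrable_comp_of_forall_mem_finset hV hVs fun k => k.1
  have h₁ : Integrable (fun ω => (X 1 T ω : ℝ)) Pr :=
    integrable_comp_of_forall_mem_finset hV hVs fun k => k.2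
  have h₀₁ : Integrable (fun ω => (X 0 T ω : ℝ) * X 1 T ω) Pr :=
    integrable_comp_of_forall_mem_finset hV hVs fun k => k.1 * k.2
  have hmeet : Integrable (fun ω => if X 0 T ω = X 1 T ω
      then 4 * α * β / ((α + β) ^ 2 * (α + β + 1)) else 0) Pr :=
    integrable_comp_of_forall_mem_finset hV hVs fun k => if k.1 = k.2 then _ else 0
  rw [hE.integral_walk_mul_walk_succ_eq hα hβ hX, integral_add (by fun_prop) hmeet,
    integral_add (by fun_prop) (by fun_prop), integral_add h₀₁ (by fun_prop),
    integral_const_mul, integral_add h₀ h₁,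
    integral_ite_eq_mul_measureReal (hE.measurable_walk hX 0 T) (hE.measurable_walk hX 1 T)]
  simp

end IsBetaEnvironment

end RandomWalk

/-- Covariance formula for two independent Beta RWREs in a common space-time i.i.d.
Beta(α,β) environment `B`:
`E[X⁽¹⁾_t X⁽²⁾_t] = (t(α−β)/(α+β))² + (4αβ/((α+β)²(α+β+1))) Σ_{s<t} P(X⁽¹⁾_s = X⁽²⁾_s)`.
The walks are realized via auxiliary i.i.d. uniform variables `U i s`, jointly
independent of the environment: `X i (s+1) = X i s + 1` if `U i s < B s (X i s)`,
and `X i (s+1) = X i s − 1` otherwise. -/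
theorem beta_rwre_covariance {Ω : Type*} [MeasurableSpace Ω]
    (Pr : Measure Ω) [IsProbabilityMeasure Pr]
    (α β : ℝ) (hα : 0 < α) (hβ : 0 < β)
    (B : ℕ → ℤ → Ω → ℝ) (U : Fin 2 → ℕ → Ω → ℝ)
    (hBmeas : ∀ s x, Measurable (B s x)) (hUmeas : ∀ i s, Measurable (U i s))
    (hindep : iIndepFun (m := fun _ : (ℕ × ℤ) ⊕ (Fin 2 × ℕ) => (inferInstance : MeasurableSpace ℝ))
      (Sum.elim (fun p : ℕ × ℤ => B p.1 p.2) (fun p : Fin 2 × ℕ => U p.1 p.2)) Pr)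
    (hBlaw : ∀ s x, Measure.map (B s x) Pr = _root_.betaMeasure α β)
    (hUlaw : ∀ i s, Measure.map (U i s) Pr = volume.restrict (Set.Ioo (0:ℝ) 1))
    (X : Fin 2 → ℕ → Ω → ℤ)
    (hX0 : ∀ i ω, X i 0 ω = 0)
    (hXrec : ∀ i s ω,
      X i (s + 1) ω = X i s ω + (if U i s ω < B s (X i s ω) ω then 1 else -1))
    (t : ℕ) :
    ∫ ω, ((X 0 t ω : ℝ) * (X 1 t ω : ℝ)) ∂Pr
      = ((t : ℝ) * (α - β) / (α + β)) ^ 2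
        + 4 * α * β / ((α + β) ^ 2 * (α + β + 1))
          * ∑ s ∈ Finset.range t, (Pr {ω | X 0 s ω = X 1 s ω}).toReal := by
  have hE : IsBetaEnvironment Pr α β B U := ⟨hBmeas, hUmeas, hindep, hBlaw, hUlaw⟩
  have hX : IsCoinWalk B U X := ⟨hX0, hXrec⟩
  induction t with
  | zero => simp [hX0]
  | succ T ih =>
    rw [hE.integral_walk_mul_walk_succ hα hβ hX, ih, hE.integral_walk hα hβ hX,
      hE.integral_walk hα hβ hX, Finset.sum_range_succ, measureReal_def]
    push_cast
    ring
end
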